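/- arXiv:1608.08529 — 6 statements merged into one kernel-verified Lean document; each statement's English description precedes it below -/
import Mathlib

section
/- Let n ≥ 2 be a natural number, let g : [a,b] → ℝ be continuous with g ≥ 0, and let h₁,…,hₙ be nonnegative functions on [a,b] all belonging to D₊[a,b] (or all to D₋[a,b]). Let α ≤ n/(n-1) and let f : [a,b] → ℝ be strictly positive and (n-1)-times differentiable with f⁽ⁱ⁾ ≥ 0 for i = 1,…,n-1 and (n+1-α)·f⁽ⁿ⁻¹⁾·f^{n(1-α)} ≥ n!·h₁·h₂²·…·hₙⁿ on [a,b]. Suppose {1,…,n} is partitioned into disjoint sets I and J such that: (i) g·∏_{i∈I} hᵢ is increasing on [a,b]; (ii) for each k = 1,…,n-1 the function (∏_{i∈I} hᵢⁱ)·(∏_{j∈J, j≥k+1} hⱼ^{j-k}) is decreasing on [a,b]; (iii) for each k = 0,…,n-2 the function ∏_{j∈J, j≤k+1} hⱼ^{k+1-j} is increasing on [a,b]. Set M := inf{g(x) : x ∈ [a,b]}, mᵢ := inf{hᵢ(x) : x ∈ [a,b]} for i = 1,…,n, and K := f(a)^{n+1} if α ≥ 0, K := f(a)^{n+1-α}·f(b)^{α}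 if α < 0. Then (b-a)·K·Mⁿ·∏_{i=1}^{n} mᵢ^{n-i} + (∫_a^b f^{α}·g·∏_{i=1}^{n} hᵢ)ⁿ ≤ ∫_a^b f^{n+1}·gⁿ·∏_{i=1}^{n} hᵢ^{n-i}. -/
/-!
Put `V(x) = ∫ₐˣ f^α ∏_{j∈J} h_j`, and let `Z_k`, `W_k` be the functions of conditions (ii) and
(iii) (`upperWeight`, `lowerWeight`). By induction on `k ≤ n - 2`,
`(n!/k!) V^k Z_k ≤ (n + 1 - α) f⁽ⁿ⁻¹⁻ᵏ⁾ f^(n - (n-k)α) W_k`; the case `k = 0` is the growth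
hypothesis. For the step write `V^(k+1) = (k+1) ∫ V^k V'`, move the decreasing `Z_{k+1}` into and
the increasing `W_{k+1}` out of the integral, use `(∏_J h_j) Z_{k+1} W_k = Z_k W_{k+1}` to apply the
induction hypothesis under the integral, and integrate `f⁽ᵐ⁺¹⁾ f^e ≤ (f⁽ᵐ⁾ f^e)'`, valid because the
derivatives of `f` and the exponents `e = n - (n-k)α` are nonnegative (this is where
`α ≤ n/(n-1)` enters). One more step, ending with `∫ (n+1-α) f' f^(n-α) = f^(n+1-α) - f(a)^(n+1-α)`,
gives `n V^(n-1) ∏_I h_i^n ∏_J h_j ≤ (f^(n+1-α) - f(a)^(n+1-α)) ∏ h_i^(n-i)`.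

Finally `U(x) = ∫ₐˣ f^α g ∏ h_i` satisfies `U ≤ (g ∏_I h_i) V` by condition (i), and the previous
bound turns into `K Mⁿ ∏ m_i^(n-i) + (Uⁿ)' ≤ f^(n+1) gⁿ ∏ h_i^(n-i)`; integrate over `[a, b]`.
-/

/-- `D₊[a,b]`: continuous functions on `[a,b]` having a right-derivative at every
point of `(a,b)`. -/
def DPlus (a b : ℝ) (h : ℝ → ℝ) : Prop :=
  ContinuousOn h (Set.Icc a b) ∧ ∀ x ∈ Set.Ioo a b, ∃ L : ℝ, HasDerivWithinAt h L (Set.Ioi x) x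

/-- `D₋[a,b]`: continuous functions on `[a,b]` having a left-derivative at every
point of `(a,b)`. -/
def DMinus (a b : ℝ) (h : ℝ → ℝ) : Prop :=
  ContinuousOn h (Set.Icc a b) ∧ ∀ x ∈ Set.Ioo a b, ∃ L : ℝ, HasDerivWithinAt h L (Set.Iio x) x

open MeasureTheory Set intervalIntegral

section Calculus

variable {a b x : ℝ}

theorem hasDerivAt_iteratedDerivWithin_Icc {f : ℝ → ℝ} {m : ℕ}
    (hf : DifferentiableOn ℝ (iteratedDerivWithin m f (Icc a b)) (Icc a b)) (hx : x ∈ Ioo a b) :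
    HasDerivAt (iteratedDerivWithin m f (Icc a b))
      (iteratedDerivWithin (m + 1) f (Icc a b) x) x := by
  have hnhds : Icc a b ∈ nhds x := Icc_mem_nhds hx.1 hx.2
  rw [iteratedDerivWithin_succ, derivWithin_of_mem_nhds hnhds]
  exact ((hf x (Ioo_subset_Icc_self hx)).differentiableAt hnhds).hasDerivAt

theorem continuousOn_primitive_Icc {ψ : ℝ → ℝ} (hab : a ≤ b)
    (hψ : ContinuousOn ψ (Icc a b)) :
    ContinuousOn (fun y => ∫ t in a..y, ψ t) (Icc a b) := by
  have hint : IntegrableOn ψ (uIcc a b) := by rw [uIcc_of_le hab]; exact hψ.integrableOn_Icc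
  simpa [uIcc_of_le hab] using continuousOn_primitive_interval hint

theorem hasDerivAt_primitive_of_mem_Ioo {ψ : ℝ → ℝ} (hψ : ContinuousOn ψ (Icc a b))
    (hx : x ∈ Ioo a b) : HasDerivAt (fun y => ∫ t in a..y, ψ t) (ψ x) x :=
  integral_hasDerivAt_right
    ((hψ.mono (Icc_subset_Icc le_rfl hx.2.le)).intervalIntegrable_of_Icc hx.1.le)
    ((hψ.mono Ioo_subset_Icc_self).stronglyMeasurableAtFilter isOpen_Ioo x hx)
    (hψ.continuousAt (Icc_mem_nhds hx.1 hx.2))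

theorem primitive_pow_succ_eq_integral {ψ : ℝ → ℝ} (hψ : ContinuousOn ψ (Icc a b))
    (hx : x ∈ Icc a b) (k : ℕ) :
    (∫ t in a..x, ψ t) ^ (k + 1) =
      ∫ t in a..x, (k + 1) * (∫ s in a..t, ψ s) ^ k * ψ t := by
  have hψx : ContinuousOn ψ (Icc a x) := hψ.mono (Icc_subset_Icc le_rfl hx.2)
  have hV := continuousOn_primitive_Icc hx.1 hψx
  rw [integral_eq_sub_of_hasDerivAt_of_le (f := fun y => (∫ t in a..y, ψ t) ^ (k + 1))
    (f' := fun t => (k + 1) * (∫ s in a..t, ψ s) ^ k * ψ t) hx.1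
    (hV.pow (k + 1)) (fun t ht => ?_)
    (((continuousOn_const.mul (hV.pow k)).mul hψx).intervalIntegrable_of_Icc hx.1)]
  · simp
  · simpa using (hasDerivAt_primitive_of_mem_Ioo hψx ht).fun_pow (k + 1)

theorem mul_integral_le_integral_mul_of_antitoneOn {φ G : ℝ → ℝ} (hax : a ≤ x)
    (hφ : ContinuousOn φ (Icc a x)) (hφ_nonneg : ∀ t ∈ Icc a x, 0 ≤ φ t)
    (hG : ContinuousOn G (Icc a x)) (hG_anti : AntitoneOn G (Icc a x)) :
    G x * ∫ t in a..x, φ t ≤ ∫ t in a..x, G t * φ t := by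
  rw [← intervalIntegral.integral_const_mul]
  refine integral_mono_on hax ((continuousOn_const.mul hφ).intervalIntegrable_of_Icc hax)
    ((hG.mul hφ).intervalIntegrable_of_Icc hax) fun t ht => ?_
  exact mul_le_mul_of_nonneg_right (hG_anti ht (right_mem_Icc.2 hax) ht.2) (hφ_nonneg t ht)

theorem integral_mul_le_mul_integral_of_monotoneOn {φ G : ℝ → ℝ} (hax : a ≤ x)
    (hφ : ContinuousOn φ (Icc a x)) (hφ_nonneg : ∀ t ∈ Icc a x, 0 ≤ φ t)
    (hG : ContinuousOn G (Icc a x)) (hG_mono : MonotoneOn G (Icc a x)) :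
    ∫ t in a..x, G t * φ t ≤ G x * ∫ t in a..x, φ t := by
  have := mul_integral_le_integral_mul_of_antitoneOn hax hφ hφ_nonneg hG.neg hG_mono.neg
  simpa [intervalIntegral.integral_neg] using this

theorem integral_mul_rpow_le_of_hasDerivAt {D D' f f' : ℝ → ℝ} {e : ℝ} (hax : a ≤ x)
    (hD : ContinuousOn D (Icc a x)) (hD' : ∀ t ∈ Ioo a x, HasDerivAt D (D' t) t)
    (hf : ContinuousOn f (Icc a x)) (hf' : ∀ t ∈ Ioo a x, HasDerivAt f (f' t) t)
    (hf_pos : ∀ t ∈ Icc a x, 0 < f t) (hD_nonneg : ∀ t ∈ Icc a x, 0 ≤ D t)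
    (hf'_nonneg : ∀ t ∈ Ioo a x, 0 ≤ f' t) (he : 0 ≤ e)
    (hint : IntegrableOn (fun t => D' t * f t ^ e) (Icc a x)) :
    ∫ t in a..x, D' t * f t ^ e ≤ D x * f x ^ e := by
  have hle := integral_le_sub_of_hasDeriv_right_of_le (g := fun t => D t * f t ^ e) hax
    (hD.mul (hf.rpow_const fun t ht => Or.inl (hf_pos t ht).ne'))
    (fun t ht => ((hD' t ht).mul ((hf' t ht).rpow_const
      (Or.inl (hf_pos t (Ioo_subset_Icc_self ht)).ne'))).hasDerivWithinAt) hint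
    (fun t ht => by
      have := hf_pos t (Ioo_subset_Icc_self ht)
      have := hD_nonneg t (Ioo_subset_Icc_self ht)
      have := hf'_nonneg t ht
      simp only [le_add_iff_nonneg_right]
      positivity)
  have := hD_nonneg a (left_mem_Icc.2 hax)
  have := hf_pos a (left_mem_Icc.2 hax)
  have : 0 ≤ D a * f a ^ e := by positivity
  linarith

end Calculus

section Step

variable {a b x : ℝ}

theorem mul_le_of_mul_le_of_mul_eq_mul {C q z w w' φ : ℝ} (hw : 0 ≤ w) (hq : w = 0 → q = 0)
    (hid : q * w = z * w') (hφ : 0 ≤ φ) (hw' : 0 ≤ w') (h : C * z ≤ φ * w) :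
    C * q ≤ φ * w' := by
  rcases hw.eq_or_lt with hw0 | hw_pos
  · rw [hq hw0.symm, mul_zero]
    positivity
  · refine le_of_mul_le_mul_right ?_ hw_pos
    calc C * q * w = C * z * w' := by rw [mul_assoc, hid, mul_assoc]
      _ ≤ φ * w * w' := mul_le_mul_of_nonneg_right h hw'
      _ = φ * w' * w := by ring

/-- One step of the induction: `Z'` is moved into the integral and `W'` out of it by monotonicity,
and `hid` transfers `ih` from the weights `Z, W` to `Z', W'`. -/
theorem primitive_pow_succ_mul_le {ρ q Z Z' W W' B B' : ℝ → ℝ} {k : ℕ} {c : ℝ}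
    (hρ : ContinuousOn ρ (Icc a b)) (hρ_nonneg : ∀ t ∈ Icc a b, 0 ≤ ρ t)
    (hq : ContinuousOn q (Icc a b)) (hq_nonneg : ∀ t ∈ Icc a b, 0 ≤ q t)
    (hZ' : ContinuousOn Z' (Icc a b)) (hZ'_anti : AntitoneOn Z' (Icc a b))
    (hW_nonneg : ∀ t ∈ Icc a b, 0 ≤ W t) (hW'_nonneg : ∀ t ∈ Icc a b, 0 ≤ W' t)
    (hW'_mono : MonotoneOn W' (Icc a b))
    (hB_nonneg : ∀ t ∈ Icc a b, 0 ≤ B t) (hρB : IntegrableOn (fun t => ρ t * B t) (Icc a b))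
    (hzero : ∀ t ∈ Icc a b, W t = 0 → q t = 0)
    (hid : ∀ t ∈ Icc a b, q t * Z' t * W t = Z t * W' t) (hc : 0 ≤ c)
    (ih : ∀ t ∈ Icc a b, (k + 1) * c * (∫ s in a..t, ρ s * q s) ^ k * Z t ≤ B t * W t)
    (hB' : ∀ x ∈ Icc a b, ∫ t in a..x, ρ t * B t ≤ B' x) (hx : x ∈ Icc a b) :
    c * (∫ t in a..x, ρ t * q t) ^ (k + 1) * Z' x ≤ B' x * W' x := by
  set V : ℝ → ℝ := fun t => ∫ s in a..t, ρ s * q s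
  have hsub : Icc a x ⊆ Icc a b := Icc_subset_Icc le_rfl hx.2
  have hψ : ContinuousOn (fun t => ρ t * q t) (Icc a b) := hρ.mul hq
  have hV : ContinuousOn V (Icc a b) := continuousOn_primitive_Icc (hx.1.trans hx.2) hψ
  have hφ : ContinuousOn (fun t => (k + 1) * V t ^ k * (ρ t * q t)) (Icc a b) :=
    (continuousOn_const.mul (hV.pow k)).mul hψ
  have hV_nonneg : ∀ t ∈ Icc a b, 0 ≤ V t := fun t ht =>
    intervalIntegral.integral_nonneg ht.1 fun s hs => by
      have hs' : s ∈ Icc a b := ⟨hs.1, hs.2.trans ht.2⟩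
      exact mul_nonneg (hρ_nonneg s hs') (hq_nonneg s hs')
  have hpt : ∀ t ∈ Icc a x, c * (Z' t * ((k + 1) * V t ^ k * (ρ t * q t))) ≤
      W' x * (ρ t * B t) := by
    intro t ht
    have htb := hsub ht
    have htrans := mul_le_of_mul_le_of_mul_eq_mul (hW_nonneg t htb)
      (fun h0 => by rw [hzero t htb h0, zero_mul]) (hid t htb) (hB_nonneg t htb)
      (hW'_nonneg t htb) (ih t htb)
    have hW't : W' t ≤ W' x := hW'_mono htb hx ht.2
    have := hρ_nonneg t htb
    have := hB_nonneg t htb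
    calc c * (Z' t * ((k + 1) * V t ^ k * (ρ t * q t)))
        = ρ t * ((k + 1) * c * V t ^ k * (q t * Z' t)) := by ring
      _ ≤ ρ t * (B t * W' t) := by gcongr
      _ ≤ ρ t * (B t * W' x) := by gcongr
      _ = W' x * (ρ t * B t) := by ring
  calc c * V x ^ (k + 1) * Z' x
      = c * (Z' x * ∫ t in a..x, (k + 1) * V t ^ k * (ρ t * q t)) := by
        rw [primitive_pow_succ_eq_integral hψ hx k]; ring
    _ ≤ c * ∫ t in a..x, Z' t * ((k + 1) * V t ^ k * (ρ t * q t)) := by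
        refine mul_le_mul_of_nonneg_left (mul_integral_le_integral_mul_of_antitoneOn hx.1
          (hφ.mono hsub) (fun t ht => ?_) (hZ'.mono hsub) (hZ'_anti.mono hsub)) hc
        have := hV_nonneg t (hsub ht)
        have := hρ_nonneg t (hsub ht)
        have := hq_nonneg t (hsub ht)
        positivity
    _ = ∫ t in a..x, c * (Z' t * ((k + 1) * V t ^ k * (ρ t * q t))) :=
        (intervalIntegral.integral_const_mul _ _).symm
    _ ≤ ∫ t in a..x, W' x * (ρ t * B t) :=
        integral_mono_on hx.1
          ((continuousOn_const.mul ((hZ'.mul hφ).mono hsub)).intervalIntegrable_of_Icc hx.1)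
          ((intervalIntegrable_iff_integrableOn_Icc_of_le hx.1).2
            ((hρB.mono_set hsub).const_mul _)) hpt
    _ = W' x * ∫ t in a..x, ρ t * B t := intervalIntegral.integral_const_mul _ _
    _ ≤ W' x * B' x := mul_le_mul_of_nonneg_left (hB' x hx) (hW'_nonneg x hx)
    _ = B' x * W' x := mul_comm _ _

end Step

section Weights

variable (h : ℕ → ℝ → ℝ) (I J : Finset ℕ)

/- `upperWeight h I J k` is the function of condition (ii) and `lowerWeight h J (k + 1)` that of
condition (iii). The filters there can be dropped because truncated subtraction already makes the
exponents `j - k` and `k + 1 - j` vanish outside them. -/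
def upperWeight (k : ℕ) (x : ℝ) : ℝ := (∏ i ∈ I, h i x ^ i) * ∏ j ∈ J, h j x ^ (j - k)

def lowerWeight (k : ℕ) (x : ℝ) : ℝ := ∏ j ∈ J, h j x ^ (k - j)

variable {h I J}

theorem upperWeight_eq_prod_filter (k : ℕ) :
    upperWeight h I J k = fun x =>
      (∏ i ∈ I, h i x ^ i) * ∏ j ∈ J.filter (fun j => k + 1 ≤ j), h j x ^ (j - k) := by
  ext x
  rw [upperWeight, Finset.prod_filter_of_ne fun j _ hj => ?_]
  by_contra hlt
  exact hj (by rw [Nat.sub_eq_zero_of_le (by omega), pow_zero])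

theorem lowerWeight_succ_eq_prod_filter (k : ℕ) :
    lowerWeight h J (k + 1) =
      fun x => ∏ j ∈ J.filter (fun j => j ≤ k + 1), h j x ^ (k + 1 - j) := by
  ext x
  rw [lowerWeight, Finset.prod_filter_of_ne fun j _ hj => ?_]
  by_contra hlt
  exact hj (by rw [Nat.sub_eq_zero_of_le (by omega), pow_zero])

theorem upperWeight_zero (hIJ : Disjoint I J) (x : ℝ) :
    upperWeight h I J 0 x = ∏ i ∈ I ∪ J, h i x ^ i := by
  simp [upperWeight, Finset.prod_union hIJ]

theorem lowerWeight_zero (x : ℝ) : lowerWeight h J 0 x = 1 := by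
  simp [lowerWeight]

theorem prod_mul_upperWeight_succ_mul_lowerWeight (k : ℕ) (x : ℝ) :
    (∏ j ∈ J, h j x) * upperWeight h I J (k + 1) x * lowerWeight h J k x =
      upperWeight h I J k x * lowerWeight h J (k + 1) x := by
  simp only [upperWeight, lowerWeight]
  calc (∏ j ∈ J, h j x) * ((∏ i ∈ I, h i x ^ i) * ∏ j ∈ J, h j x ^ (j - (k + 1))) *
        ∏ j ∈ J, h j x ^ (k - j)
      = (∏ i ∈ I, h i x ^ i) * ∏ j ∈ J, h j x ^ (1 + (j - (k + 1)) + (k - j)) := by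
        simp only [pow_add, pow_one, Finset.prod_mul_distrib]; ring
    _ = (∏ i ∈ I, h i x ^ i) * ∏ j ∈ J, h j x ^ ((j - k) + (k + 1 - j)) := by
        congr 1
        exact Finset.prod_congr rfl fun j _ => by congr 1; omega
    _ = _ := by simp only [pow_add, Finset.prod_mul_distrib]; ring

theorem prod_pow_mul_lowerWeight_eq {n : ℕ} (hIJ : Disjoint I J)
    (hIJunion : I ∪ J = Finset.Icc 1 n) (x : ℝ) :
    (∏ i ∈ I, h i x ^ n) * (∏ j ∈ J, h j x) * lowerWeight h J (n - 1) x =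
      upperWeight h I J (n - 1) x * ∏ i ∈ I ∪ J, h i x ^ (n - i) := by
  have hmem : ∀ i ∈ I ∪ J, 1 ≤ i ∧ i ≤ n := fun i hi =>
    Finset.mem_Icc.1 (hIJunion ▸ hi)
  simp only [upperWeight, lowerWeight, Finset.prod_union hIJ]
  calc (∏ i ∈ I, h i x ^ n) * (∏ j ∈ J, h j x) * ∏ j ∈ J, h j x ^ (n - 1 - j)
      = (∏ i ∈ I, h i x ^ n) * ∏ j ∈ J, h j x ^ (1 + (n - 1 - j)) := by
        simp only [pow_add, pow_one, Finset.prod_mul_distrib]; ring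
    _ = (∏ i ∈ I, h i x ^ (i + (n - i))) * ∏ j ∈ J, h j x ^ ((j - (n - 1)) + (n - j)) := by
        congr 1 <;> refine Finset.prod_congr rfl fun i hi => ?_
        · have := hmem i (Finset.mem_union_left _ hi); congr 1; omega
        · have := hmem i (Finset.mem_union_right _ hi); congr 1; omega
    _ = _ := by simp only [pow_add, Finset.prod_mul_distrib]; ring

theorem prod_eq_zero_of_lowerWeight_eq_zero {k : ℕ} {x : ℝ} (h0 : lowerWeight h J k x = 0) :
    ∏ j ∈ J, h j x = 0 := by
  obtain ⟨j, hj, hzero⟩ := Finset.prod_eq_zero_iff.1 h0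
  exact Finset.prod_eq_zero hj (pow_eq_zero_iff'.1 hzero).1

theorem lowerWeight_nonneg {x : ℝ} (hh : ∀ j ∈ J, 0 ≤ h j x) (k : ℕ) :
    0 ≤ lowerWeight h J k x :=
  Finset.prod_nonneg fun j hj => pow_nonneg (hh j hj) _

theorem continuousOn_upperWeight {s : Set ℝ} (hh : ∀ i ∈ I ∪ J, ContinuousOn (h i) s) (k : ℕ) :
    ContinuousOn (upperWeight h I J k) s :=
  (continuousOn_finsetProd _ fun i hi => (hh i (Finset.mem_union_left _ hi)).pow _).mul
    (continuousOn_finsetProd _ fun j hj => (hh j (Finset.mem_union_right _ hj)).pow _)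

end Weights

section Derivatives

structure PosNonnegDerivsOn (n : ℕ) (f : ℝ → ℝ) (a b : ℝ) : Prop where
  pos : ∀ x ∈ Icc a b, 0 < f x
  differentiableOn : ∀ i < n - 1,
    DifferentiableOn ℝ (iteratedDerivWithin i f (Icc a b)) (Icc a b)
  nonneg : ∀ i, 1 ≤ i → i ≤ n - 1 → ∀ x ∈ Icc a b,
    0 ≤ iteratedDerivWithin i f (Icc a b) x

noncomputable def chainBound (f : ℝ → ℝ) (a b α : ℝ) (n k : ℕ) (x : ℝ) : ℝ :=
  iteratedDerivWithin (n - 1 - k) f (Icc a b) x * f x ^ ((n : ℝ) - (n - k) * α)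

variable {a b x α : ℝ} {n : ℕ} {f : ℝ → ℝ}

theorem sub_mul_nonneg_of_le_div (hn : 2 ≤ n) (hα : α ≤ n / (n - 1)) {r : ℝ} (hr0 : 0 ≤ r)
    (hr : r ≤ n - 1) : 0 ≤ n - r * α := by
  have hn1 : (0 : ℝ) < n - 1 := by
    have : (2 : ℝ) ≤ n := by exact_mod_cast hn
    linarith
  have hα' : α * (n - 1) ≤ n := (le_div_iff₀ hn1).1 hα
  rcases le_or_gt α 0 with hα0 | hα0 <;> nlinarith

theorem add_one_sub_pos_of_le_div (hn : 2 ≤ n) (hα : α ≤ n / (n - 1)) : 0 < n + 1 - α := by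
  have : (2 : ℝ) ≤ n := by exact_mod_cast hn
  have := sub_mul_nonneg_of_le_div hn hα zero_le_one (by linarith)
  linarith

theorem rpow_mul_chainBound (hx : 0 < f x) (k : ℕ) :
    f x ^ α * chainBound f a b α n k x =
      iteratedDerivWithin (n - 1 - k) f (Icc a b) x * f x ^ ((n : ℝ) - (n - (k + 1)) * α) := by
  rw [chainBound, mul_left_comm, ← Real.rpow_add hx]
  ring_nf

namespace PosNonnegDerivsOn

theorem iteratedDerivWithin_nonneg (hf : PosNonnegDerivsOn n f a b) {m : ℕ} (hm : m ≤ n - 1)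
    (hx : x ∈ Icc a b) : 0 ≤ iteratedDerivWithin m f (Icc a b) x := by
  rcases Nat.eq_zero_or_pos m with rfl | hm_pos
  · exact (hf.pos x hx).le
  · exact hf.nonneg m hm_pos hm x hx

theorem continuousOn (hf : PosNonnegDerivsOn n f a b) (hn : 2 ≤ n) :
    ContinuousOn f (Icc a b) := by
  simpa using (hf.differentiableOn 0 (by omega)).continuousOn

theorem hasDerivAt (hf : PosNonnegDerivsOn n f a b) (hn : 2 ≤ n) (hx : x ∈ Ioo a b) :
    HasDerivAt f (iteratedDerivWithin 1 f (Icc a b) x) x := by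
  simpa using hasDerivAt_iteratedDerivWithin_Icc (hf.differentiableOn 0 (by omega)) hx

theorem monotoneOn (hf : PosNonnegDerivsOn n f a b) (hn : 2 ≤ n) : MonotoneOn f (Icc a b) := by
  refine monotoneOn_of_deriv_nonneg (convex_Icc a b) (hf.continuousOn hn) (fun t ht => ?_)
    (fun t ht => ?_) <;> rw [interior_Icc] at ht
  · exact (hf.hasDerivAt hn ht).differentiableAt.differentiableWithinAt
  · rw [(hf.hasDerivAt hn ht).deriv]
    exact hf.nonneg 1 le_rfl (by omega) t (Ioo_subset_Icc_self ht)

theorem continuousOn_rpow (hf : PosNonnegDerivsOn n f a b) (hn : 2 ≤ n) (e : ℝ) :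
    ContinuousOn (fun t => f t ^ e) (Icc a b) :=
  (hf.continuousOn hn).rpow_const fun t ht => Or.inl (hf.pos t ht).ne'

theorem integrableOn_iteratedDerivWithin_succ_mul_rpow (hf : PosNonnegDerivsOn n f a b) {m : ℕ}
    (hm : m + 2 ≤ n) (e : ℝ) :
    IntegrableOn (fun t => iteratedDerivWithin (m + 1) f (Icc a b) t * f t ^ e) (Icc a b) := by
  have hderiv : IntegrableOn (iteratedDerivWithin (m + 1) f (Icc a b)) (Ioc a b) :=
    integrableOn_deriv_of_nonneg (hf.differentiableOn m (by omega)).continuousOn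
      (fun t ht => hasDerivAt_iteratedDerivWithin_Icc (hf.differentiableOn m (by omega)) ht)
      (fun t ht => hf.nonneg (m + 1) (by omega) (by omega) t (Ioo_subset_Icc_self ht))
  exact ((integrableOn_Icc_iff_integrableOn_Ioc (by finiteness)).2 hderiv).mul_continuousOn
    (hf.continuousOn_rpow (by omega) e) isCompact_Icc

theorem integral_iteratedDerivWithin_succ_mul_rpow_le (hf : PosNonnegDerivsOn n f a b) {m : ℕ}
    (hm : m + 2 ≤ n) {e : ℝ} (he : 0 ≤ e) (hx : x ∈ Icc a b) :
    ∫ t in a..x, iteratedDerivWithin (m + 1) f (Icc a b) t * f t ^ e ≤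
      iteratedDerivWithin m f (Icc a b) x * f x ^ e := by
  have hsub : Icc a x ⊆ Icc a b := Icc_subset_Icc le_rfl hx.2
  have hsub' : Ioo a x ⊆ Ioo a b := Ioo_subset_Ioo le_rfl hx.2
  exact integral_mul_rpow_le_of_hasDerivAt hx.1
    ((hf.differentiableOn m (by omega)).continuousOn.mono hsub)
    (fun t ht => hasDerivAt_iteratedDerivWithin_Icc (hf.differentiableOn m (by omega)) (hsub' ht))
    ((hf.continuousOn (by omega)).mono hsub) (fun t ht => hf.hasDerivAt (by omega) (hsub' ht))
    (fun t ht => hf.pos t (hsub ht))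
    (fun t ht => hf.iteratedDerivWithin_nonneg (by omega) (hsub ht))
    (fun t ht => hf.nonneg 1 le_rfl (by omega) t (Ioo_subset_Icc_self (hsub' ht))) he
    ((hf.integrableOn_iteratedDerivWithin_succ_mul_rpow hm e).mono_set hsub)

theorem chainBound_nonneg (hf : PosNonnegDerivsOn n f a b) (k : ℕ) (hx : x ∈ Icc a b) :
    0 ≤ chainBound f a b α n k x :=
  mul_nonneg (hf.iteratedDerivWithin_nonneg (by omega) hx) (Real.rpow_nonneg (hf.pos x hx).le _)

theorem integrableOn_rpow_mul_chainBound (hf : PosNonnegDerivsOn n f a b) {k : ℕ}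
    (hk : k + 2 ≤ n) :
    IntegrableOn (fun t => f t ^ α * chainBound f a b α n k t) (Icc a b) := by
  have hidx : n - 1 - k = n - 2 - k + 1 := by omega
  refine (hf.integrableOn_iteratedDerivWithin_succ_mul_rpow (m := n - 2 - k) (by omega)
    ((n : ℝ) - (n - (k + 1)) * α)).congr_fun (fun t ht => ?_) measurableSet_Icc
  rw [rpow_mul_chainBound (hf.pos t ht), hidx]

theorem integral_rpow_mul_chainBound_le (hf : PosNonnegDerivsOn n f a b) (hn : 2 ≤ n)
    (hα : α ≤ n / (n - 1)) {k : ℕ} (hk : k + 3 ≤ n) (hx : x ∈ Icc a b) :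
    ∫ t in a..x, f t ^ α * chainBound f a b α n k t ≤ chainBound f a b α n (k + 1) x := by
  have hsub : uIcc a x ⊆ Icc a b := by rw [uIcc_of_le hx.1]; exact Icc_subset_Icc le_rfl hx.2
  rw [intervalIntegral.integral_congr fun t ht => rpow_mul_chainBound (hf.pos t (hsub ht)) k,
    chainBound, show n - 1 - k = n - 2 - k + 1 by omega, show n - 1 - (k + 1) = n - 2 - k by omega]
  push_cast
  have hk' : (k : ℝ) + 3 ≤ n := by exact_mod_cast hk
  exact hf.integral_iteratedDerivWithin_succ_mul_rpow_le (by omega)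
    (sub_mul_nonneg_of_le_div hn hα (by linarith) (by linarith [k.cast_nonneg (α := ℝ)])) hx

theorem integral_rpow_mul_chainBound_sub_two_le (hf : PosNonnegDerivsOn n f a b) (hn : 2 ≤ n)
    (hx : x ∈ Icc a b) :
    ∫ t in a..x, f t ^ α * ((n + 1 - α) * chainBound f a b α n (n - 2) t) ≤
      f x ^ ((n : ℝ) + 1 - α) - f a ^ ((n : ℝ) + 1 - α) := by
  have hsub : Icc a x ⊆ Icc a b := Icc_subset_Icc le_rfl hx.2
  have hsub' : Ioo a x ⊆ Ioo a b := Ioo_subset_Ioo le_rfl hx.2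
  have hint : IntegrableOn (fun t => f t ^ α * ((n + 1 - α) * chainBound f a b α n (n - 2) t))
      (Icc a b) :=
    IntegrableOn.congr_fun ((hf.integrableOn_rpow_mul_chainBound (k := n - 2) (by omega)).const_mul
      ((n : ℝ) + 1 - α)) (fun t _ => by ring) measurableSet_Icc
  refine integral_le_sub_of_hasDeriv_right_of_le hx.1
    ((hf.continuousOn_rpow hn _).mono hsub)
    (fun t ht => ((hf.hasDerivAt hn (hsub' ht)).rpow_const
      (Or.inl (hf.pos t (hsub (Ioo_subset_Icc_self ht))).ne')).hasDerivWithinAt)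
    (hint.mono_set hsub) (fun t ht => le_of_eq ?_)
  rw [mul_left_comm, rpow_mul_chainBound (hf.pos t (hsub (Ioo_subset_Icc_self ht))),
    show n - 1 - (n - 2) = 1 by omega]
  push_cast [Nat.cast_sub hn]
  ring_nf

end PosNonnegDerivsOn

end Derivatives

section Chain

variable {a b x α : ℝ} {n : ℕ} {f : ℝ → ℝ} {h : ℕ → ℝ → ℝ} {I J : Finset ℕ}

theorem factorial_div_factorial_eq_succ_mul (n k : ℕ) :
    (n.factorial / k.factorial : ℝ) = (k + 1) * (n.factorial / (k + 1).factorial : ℝ) := by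
  rw [Nat.factorial_succ]
  push_cast
  field_simp

theorem primitive_pow_succ_mul_upperWeight_le (hf : PosNonnegDerivsOn n f a b) (hn : 2 ≤ n)
    (hα : α ≤ n / (n - 1)) (hh_nonneg : ∀ i ∈ I ∪ J, ∀ x ∈ Icc a b, 0 ≤ h i x)
    (hh_cont : ∀ i ∈ I ∪ J, ContinuousOn (h i) (Icc a b)) {k : ℕ} (hk : k + 2 ≤ n)
    (hZ : AntitoneOn (upperWeight h I J (k + 1)) (Icc a b))
    (hW : MonotoneOn (lowerWeight h J (k + 1)) (Icc a b))
    (ih : ∀ x ∈ Icc a b, (n.factorial / k.factorial : ℝ) *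
      (∫ t in a..x, f t ^ α * ∏ j ∈ J, h j t) ^ k * upperWeight h I J k x ≤
        (n + 1 - α) * chainBound f a b α n k x * lowerWeight h J k x)
    {B' : ℝ → ℝ} (hB' : ∀ x ∈ Icc a b,
      ∫ t in a..x, f t ^ α * ((n + 1 - α) * chainBound f a b α n k t) ≤ B' x)
    (hx : x ∈ Icc a b) :
    (n.factorial / (k + 1).factorial : ℝ) *
        (∫ t in a..x, f t ^ α * ∏ j ∈ J, h j t) ^ (k + 1) * upperWeight h I J (k + 1) x ≤
      B' x * lowerWeight h J (k + 1) x := by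
  have hJ : ∀ j ∈ J, ∀ x ∈ Icc a b, 0 ≤ h j x := fun j hj =>
    hh_nonneg j (Finset.mem_union_right _ hj)
  refine primitive_pow_succ_mul_le (hf.continuousOn_rpow hn α)
    (fun t ht => Real.rpow_nonneg (hf.pos t ht).le _)
    (continuousOn_finsetProd _ fun j hj => hh_cont j (Finset.mem_union_right _ hj))
    (fun t ht => Finset.prod_nonneg fun j hj => hJ j hj t ht)
    (continuousOn_upperWeight hh_cont _) hZ
    (fun t ht => lowerWeight_nonneg (fun j hj => hJ j hj t ht) _)
    (fun t ht => lowerWeight_nonneg (fun j hj => hJ j hj t ht) _) hW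
    (fun t ht => mul_nonneg (add_one_sub_pos_of_le_div hn hα).le (hf.chainBound_nonneg k ht))
    (IntegrableOn.congr_fun ((hf.integrableOn_rpow_mul_chainBound hk).const_mul
      ((n : ℝ) + 1 - α)) (fun t _ => by ring) measurableSet_Icc)
    (fun t _ h0 => prod_eq_zero_of_lowerWeight_eq_zero h0)
    (fun t _ => prod_mul_upperWeight_succ_mul_lowerWeight k t) (by positivity)
    (fun t ht => ?_) hB' hx
  rw [← factorial_div_factorial_eq_succ_mul]
  exact ih t ht

theorem primitive_pow_mul_upperWeight_le (hf : PosNonnegDerivsOn n f a b) (hn : 2 ≤ n)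
    (hα : α ≤ n / (n - 1)) (hh_nonneg : ∀ i ∈ I ∪ J, ∀ x ∈ Icc a b, 0 ≤ h i x)
    (hh_cont : ∀ i ∈ I ∪ J, ContinuousOn (h i) (Icc a b))
    (hZ : ∀ k, 1 ≤ k → k ≤ n - 1 → AntitoneOn (upperWeight h I J k) (Icc a b))
    (hW : ∀ k, 1 ≤ k → k ≤ n - 1 → MonotoneOn (lowerWeight h J k) (Icc a b))
    (hgrowth : ∀ x ∈ Icc a b,
      (n.factorial : ℝ) * upperWeight h I J 0 x ≤ (n + 1 - α) * chainBound f a b α n 0 x)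
    {k : ℕ} (hk : k + 2 ≤ n) (hx : x ∈ Icc a b) :
    (n.factorial / k.factorial : ℝ) * (∫ t in a..x, f t ^ α * ∏ j ∈ J, h j t) ^ k *
      upperWeight h I J k x ≤ (n + 1 - α) * chainBound f a b α n k x * lowerWeight h J k x := by
  induction k generalizing x with
  | zero => simpa [lowerWeight_zero] using hgrowth x hx
  | succ k ih =>
    refine primitive_pow_succ_mul_upperWeight_le hf hn hα hh_nonneg hh_cont (by omega)
      (hZ _ le_add_self (by omega)) (hW _ le_add_self (by omega)) (fun x hx => ih (by omega) hx)
      (B' := fun x => (n + 1 - α) * chainBound f a b α n (k + 1) x) (fun x hx => ?_) hx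
    simp only [mul_left_comm (f _ ^ α), intervalIntegral.integral_const_mul]
    exact mul_le_mul_of_nonneg_left (hf.integral_rpow_mul_chainBound_le hn hα (by omega) hx)
      (add_one_sub_pos_of_le_div hn hα).le

theorem mul_primitive_pow_mul_prod_le (hf : PosNonnegDerivsOn n f a b) (hn : 2 ≤ n)
    (hα : α ≤ n / (n - 1)) (hh_nonneg : ∀ i ∈ I ∪ J, ∀ x ∈ Icc a b, 0 ≤ h i x)
    (hh_cont : ∀ i ∈ I ∪ J, ContinuousOn (h i) (Icc a b))
    (hIJ : Disjoint I J) (hIJunion : I ∪ J = Finset.Icc 1 n)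
    (hZ : ∀ k, 1 ≤ k → k ≤ n - 1 → AntitoneOn (upperWeight h I J k) (Icc a b))
    (hW : ∀ k, 1 ≤ k → k ≤ n - 1 → MonotoneOn (lowerWeight h J k) (Icc a b))
    (hgrowth : ∀ x ∈ Icc a b,
      (n.factorial : ℝ) * upperWeight h I J 0 x ≤ (n + 1 - α) * chainBound f a b α n 0 x)
    (hx : x ∈ Icc a b) :
    n * (∫ t in a..x, f t ^ α * ∏ j ∈ J, h j t) ^ (n - 1) *
        ((∏ i ∈ I, h i x ^ n) * ∏ j ∈ J, h j x) ≤
      (f x ^ ((n : ℝ) + 1 - α) - f a ^ ((n : ℝ) + 1 - α)) *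
        ∏ i ∈ I ∪ J, h i x ^ (n - i) := by
  have ha : a ∈ Icc a b := left_mem_Icc.2 (hx.1.trans hx.2)
  have hlast := primitive_pow_succ_mul_upperWeight_le hf hn hα hh_nonneg hh_cont (k := n - 2)
    (by omega) (hZ _ le_add_self (by omega)) (hW _ le_add_self (by omega))
    (fun x hx => primitive_pow_mul_upperWeight_le hf hn hα hh_nonneg hh_cont hZ hW hgrowth
      (by omega) hx)
    (fun x hx => hf.integral_rpow_mul_chainBound_sub_two_le hn hx) hx
  rw [show n - 2 + 1 = n - 1 by omega, ← Nat.mul_factorial_pred (by omega : n ≠ 0)] at hlast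
  push_cast at hlast
  rw [mul_div_cancel_right₀ _ (by positivity)] at hlast
  refine mul_le_of_mul_le_of_mul_eq_mul
    (lowerWeight_nonneg (fun j hj => hh_nonneg j (Finset.mem_union_right _ hj) x hx) _)
    (fun h0 => by rw [prod_eq_zero_of_lowerWeight_eq_zero h0, mul_zero])
    (prod_pow_mul_lowerWeight_eq hIJ hIJunion x)
    (sub_nonneg.2 (Real.rpow_le_rpow (hf.pos a ha).le (hf.monotoneOn hn ha hx hx.1)
      (add_one_sub_pos_of_le_div hn hα).le))
    (Finset.prod_nonneg fun i hi => pow_nonneg (hh_nonneg i hi x hx) _) hlast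

end Chain

section Assembly

variable {a b x : ℝ}

theorem mul_add_primitive_pow_le_integral {φ R : ℝ → ℝ} {C : ℝ} {n : ℕ} (hn : n ≠ 0)
    (hab : a ≤ b) (hφ : ContinuousOn φ (Icc a b)) (hR : ContinuousOn R (Icc a b))
    (hle : ∀ x ∈ Ioo a b, C + n * (∫ t in a..x, φ t) ^ (n - 1) * φ x ≤ R x) :
    (b - a) * C + (∫ t in a..b, φ t) ^ n ≤ ∫ t in a..b, R t := by
  have := sub_le_integral_of_hasDeriv_right_of_le
    (g := fun x => (x - a) * C + (∫ t in a..x, φ t) ^ n) hab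
    (((continuousOn_id.sub continuousOn_const).mul continuousOn_const).add
      ((continuousOn_primitive_Icc hab hφ).pow n))
    (fun x hx => ((((hasDerivAt_id x).sub_const a).mul_const C).add
      ((hasDerivAt_primitive_of_mem_Ioo hφ hx).fun_pow n)).hasDerivWithinAt)
    hR.integrableOn_Icc (fun x hx => by simpa using hle x hx)
  simpa [zero_pow hn] using this

theorem sInf_image_nonneg {g : ℝ → ℝ} {s : Set ℝ} (hg : ∀ x ∈ s, 0 ≤ g x) :
    0 ≤ sInf (g '' s) :=
  Real.sInf_nonneg (by rintro _ ⟨t, ht, rfl⟩; exact hg t ht)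

theorem sInf_image_le {g : ℝ → ℝ} {s : Set ℝ} (hg : ∀ x ∈ s, 0 ≤ g x) (hx : x ∈ s) :
    sInf (g '' s) ≤ g x :=
  csInf_le ⟨0, by rintro _ ⟨t, ht, rfl⟩; exact hg t ht⟩ ⟨x, hx, rfl⟩

theorem ite_rpow_le_rpow_mul_rpow {y z α : ℝ} (n : ℕ) (hy : 0 < y) (hyx : y ≤ x)
    (hxz : x ≤ z) :
    (if 0 ≤ α then y ^ (n + 1) else y ^ ((n : ℝ) + 1 - α) * z ^ α) ≤
      y ^ ((n : ℝ) + 1 - α) * x ^ α := by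
  split_ifs with hα
  · rw [← Real.rpow_natCast, show ((n + 1 : ℕ) : ℝ) = (n + 1 - α) + α by push_cast; ring,
      Real.rpow_add hy]
    gcongr
  · exact mul_le_mul_of_nonneg_left (Real.rpow_le_rpow_of_nonpos (hy.trans_le hyx) hxz
      (not_le.1 hα).le) (Real.rpow_nonneg hy.le _)

variable {α : ℝ} {n : ℕ} {f g : ℝ → ℝ} {h : ℕ → ℝ → ℝ} {I J : Finset ℕ}

theorem integral_rpow_mul_mul_prod_le (hf_cont : ContinuousOn f (Icc a b))
    (hf_pos : ∀ x ∈ Icc a b, 0 < f x) (hg_cont : ContinuousOn g (Icc a b))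
    (hh_nonneg : ∀ i ∈ I ∪ J, ∀ x ∈ Icc a b, 0 ≤ h i x)
    (hh_cont : ∀ i ∈ I ∪ J, ContinuousOn (h i) (Icc a b)) (hIJ : Disjoint I J)
    (hi : MonotoneOn (fun x => g x * ∏ i ∈ I, h i x) (Icc a b)) (hx : x ∈ Icc a b) :
    ∫ t in a..x, f t ^ α * g t * ∏ i ∈ I ∪ J, h i t ≤
      (g x * ∏ i ∈ I, h i x) * ∫ t in a..x, f t ^ α * ∏ j ∈ J, h j t := by
  have hsub : Icc a x ⊆ Icc a b := Icc_subset_Icc le_rfl hx.2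
  rw [intervalIntegral.integral_congr (g := fun t => (g t * ∏ i ∈ I, h i t) *
    (f t ^ α * ∏ j ∈ J, h j t)) fun t _ => by simp only [Finset.prod_union hIJ]; ring]
  exact integral_mul_le_mul_integral_of_monotoneOn hx.1
    (((hf_cont.rpow_const fun t ht => Or.inl (hf_pos t ht).ne').mul
      (continuousOn_finsetProd _ fun j hj => hh_cont j (Finset.mem_union_right _ hj))).mono hsub)
    (fun t ht => mul_nonneg (Real.rpow_nonneg (hf_pos t (hsub ht)).le _)
      (Finset.prod_nonneg fun j hj => hh_nonneg j (Finset.mem_union_right _ hj) t (hsub ht)))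
    ((hg_cont.mul (continuousOn_finsetProd _ fun i hi =>
      hh_cont i (Finset.mem_union_left _ hi))).mono hsub) (hi.mono hsub)

theorem ite_mul_sInf_image_pow_mul_prod_le (hf_pos : ∀ x ∈ Icc a b, 0 < f x)
    (hf_mono : MonotoneOn f (Icc a b)) (hg_nonneg : ∀ x ∈ Icc a b, 0 ≤ g x)
    (hh_nonneg : ∀ i ∈ I ∪ J, ∀ x ∈ Icc a b, 0 ≤ h i x) (hx : x ∈ Icc a b) :
    (if 0 ≤ α then f a ^ (n + 1) else f a ^ ((n : ℝ) + 1 - α) * f b ^ α) *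
        sInf (g '' Icc a b) ^ n * ∏ i ∈ I ∪ J, sInf (h i '' Icc a b) ^ (n - i) ≤
      f a ^ ((n : ℝ) + 1 - α) * f x ^ α * g x ^ n * ∏ i ∈ I ∪ J, h i x ^ (n - i) := by
  have ha : a ∈ Icc a b := left_mem_Icc.2 (hx.1.trans hx.2)
  have hb : b ∈ Icc a b := right_mem_Icc.2 (hx.1.trans hx.2)
  have hfa := hf_pos a ha
  have hfb := hf_pos b hb
  have hfx := hf_pos x hx
  have hgx := hg_nonneg x hx
  have hK : 0 ≤ if 0 ≤ α then f a ^ (n + 1) else f a ^ ((n : ℝ) + 1 - α) * f b ^ α := by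
    split_ifs <;> positivity
  have hM := sInf_image_nonneg hg_nonneg
  have hm : ∀ i ∈ I ∪ J, 0 ≤ sInf (h i '' Icc a b) := fun i hi =>
    sInf_image_nonneg (hh_nonneg i hi)
  exact mul_le_mul (mul_le_mul
    (ite_rpow_le_rpow_mul_rpow n hfa (hf_mono ha hx hx.1) (hf_mono hx hb hx.2))
    (pow_le_pow_left₀ hM (sInf_image_le hg_nonneg hx) n) (by positivity) (by positivity))
    (Finset.prod_le_prod (fun i hi => pow_nonneg (hm i hi) _)
      (fun i hi => pow_le_pow_left₀ (hm i hi) (sInf_image_le (hh_nonneg i hi) hx) _))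
    (Finset.prod_nonneg fun i hi => pow_nonneg (hm i hi) _) (by positivity)

theorem const_add_mul_primitive_pow_mul_le (hn : n ≠ 0) (hf_pos : ∀ x ∈ Icc a b, 0 < f x)
    (hf_mono : MonotoneOn f (Icc a b)) (hf_cont : ContinuousOn f (Icc a b))
    (hg_cont : ContinuousOn g (Icc a b)) (hg_nonneg : ∀ x ∈ Icc a b, 0 ≤ g x)
    (hh_nonneg : ∀ i ∈ I ∪ J, ∀ x ∈ Icc a b, 0 ≤ h i x)
    (hh_cont : ∀ i ∈ I ∪ J, ContinuousOn (h i) (Icc a b)) (hIJ : Disjoint I J)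
    (hi : MonotoneOn (fun x => g x * ∏ i ∈ I, h i x) (Icc a b)) (hx : x ∈ Icc a b)
    (htop : n * (∫ t in a..x, f t ^ α * ∏ j ∈ J, h j t) ^ (n - 1) *
        ((∏ i ∈ I, h i x ^ n) * ∏ j ∈ J, h j x) ≤
      (f x ^ ((n : ℝ) + 1 - α) - f a ^ ((n : ℝ) + 1 - α)) *
        ∏ i ∈ I ∪ J, h i x ^ (n - i)) :
    (if 0 ≤ α then f a ^ (n + 1) else f a ^ ((n : ℝ) + 1 - α) * f b ^ α) *
        sInf (g '' Icc a b) ^ n * ∏ i ∈ I ∪ J, sInf (h i '' Icc a b) ^ (n - i) +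
      n * (∫ t in a..x, f t ^ α * g t * ∏ i ∈ I ∪ J, h i t) ^ (n - 1) *
        (f x ^ α * g x * ∏ i ∈ I ∪ J, h i x) ≤
    f x ^ (n + 1) * g x ^ n * ∏ i ∈ I ∪ J, h i x ^ (n - i) := by
  have hfx := hf_pos x hx
  have hgx := hg_nonneg x hx
  have hhx : ∀ i ∈ I ∪ J, 0 ≤ h i x := fun i hi => hh_nonneg i hi x hx
  rw [Finset.prod_pow] at htop
  set P := ∏ i ∈ I, h i x
  set Q := ∏ j ∈ J, h j x
  set V := ∫ t in a..x, f t ^ α * ∏ j ∈ J, h j t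
  set U := ∫ t in a..x, f t ^ α * g t * ∏ i ∈ I ∪ J, h i t
  set Y := ∏ i ∈ I ∪ J, h i x ^ (n - i)
  have hP : 0 ≤ P := Finset.prod_nonneg fun i hi => hhx i (Finset.mem_union_left _ hi)
  have hQ : 0 ≤ Q := Finset.prod_nonneg fun j hj => hhx j (Finset.mem_union_right _ hj)
  have hU : 0 ≤ U := intervalIntegral.integral_nonneg hx.1 fun t ht => by
    have ht' : t ∈ Icc a b := ⟨ht.1, ht.2.trans hx.2⟩
    have := hf_pos t ht'
    have := hg_nonneg t ht'
    exact mul_nonneg (by positivity) (Finset.prod_nonneg fun i hi => hh_nonneg i hi t ht')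
  have hUV : U ≤ g x * P * V :=
    integral_rpow_mul_mul_prod_le hf_cont hf_pos hg_cont hh_nonneg hh_cont hIJ hi hx
  have hconst := ite_mul_sInf_image_pow_mul_prod_le (α := α) (n := n) hf_pos hf_mono hg_nonneg
    hh_nonneg hx
  have hmain : n * U ^ (n - 1) * (f x ^ α * g x * ∏ i ∈ I ∪ J, h i x) ≤
      g x ^ n * f x ^ α * ((f x ^ ((n : ℝ) + 1 - α) - f a ^ ((n : ℝ) + 1 - α)) * Y) := by
    rw [Finset.prod_union hIJ]
    calc n * U ^ (n - 1) * (f x ^ α * g x * (P * Q))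
        ≤ n * (g x * P * V) ^ (n - 1) * (f x ^ α * g x * (P * Q)) := by gcongr
      _ = g x ^ n * f x ^ α * (n * V ^ (n - 1) * (P ^ n * Q)) := by
        obtain ⟨m, rfl⟩ : ∃ m, n = m + 1 := ⟨n - 1, by omega⟩
        simp only [Nat.add_sub_cancel]
        ring
      _ ≤ _ := mul_le_mul_of_nonneg_left htop (by positivity)
  calc _ ≤ f a ^ ((n : ℝ) + 1 - α) * f x ^ α * g x ^ n * Y +
        g x ^ n * f x ^ α * ((f x ^ ((n : ℝ) + 1 - α) - f a ^ ((n : ℝ) + 1 - α)) * Y) :=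
        add_le_add hconst hmain
    _ = f x ^ ((n : ℝ) + 1 - α) * f x ^ α * g x ^ n * Y := by ring
    _ = f x ^ (n + 1) * g x ^ n * Y := by
        rw [← Real.rpow_add hfx,
          show (n : ℝ) + 1 - α + α = ((n + 1 : ℕ) : ℝ) by push_cast; ring,
          Real.rpow_natCast]

end Assembly

theorem stmt0 (a b : ℝ) (hab : a < b) (n : ℕ) (hn : 2 ≤ n)
    (g : ℝ → ℝ) (hg_cont : ContinuousOn g (Set.Icc a b))
    (hg_nonneg : ∀ x ∈ Set.Icc a b, 0 ≤ g x)
    (h : ℕ → ℝ → ℝ)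
    (hD : (∀ i ∈ Finset.Icc 1 n, DPlus a b (h i)) ∨ (∀ i ∈ Finset.Icc 1 n, DMinus a b (h i)))
    (hh_nonneg : ∀ i ∈ Finset.Icc 1 n, ∀ x ∈ Set.Icc a b, 0 ≤ h i x)
    (α : ℝ) (hα : α ≤ (n : ℝ) / ((n : ℝ) - 1))
    (f : ℝ → ℝ) (hf_pos : ∀ x ∈ Set.Icc a b, 0 < f x)
    (hf_diff : ∀ i < n - 1,
      DifferentiableOn ℝ (iteratedDerivWithin i f (Set.Icc a b)) (Set.Icc a b))
    (hf_nonneg : ∀ i, 1 ≤ i → i ≤ n - 1 → ∀ x ∈ Set.Icc a b,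
      0 ≤ iteratedDerivWithin i f (Set.Icc a b) x)
    (hgrowth : ∀ x ∈ Set.Icc a b,
      (n.factorial : ℝ) * ∏ i ∈ Finset.Icc 1 n, h i x ^ i ≤
        ((n : ℝ) + 1 - α) * iteratedDerivWithin (n - 1) f (Set.Icc a b) x *
          f x ^ ((n : ℝ) * (1 - α)))
    (I J : Finset ℕ) (hIJ : Disjoint I J) (hIJunion : I ∪ J = Finset.Icc 1 n)
    (hi : MonotoneOn (fun x => g x * ∏ i ∈ I, h i x) (Set.Icc a b))
    (hii : ∀ k, 1 ≤ k → k ≤ n - 1 →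
      AntitoneOn (fun x => (∏ i ∈ I, h i x ^ i) *
        ∏ j ∈ J.filter (fun j => k + 1 ≤ j), h j x ^ (j - k)) (Set.Icc a b))
    (hiii : ∀ k ≤ n - 2,
      MonotoneOn (fun x => ∏ j ∈ J.filter (fun j => j ≤ k + 1), h j x ^ (k + 1 - j))
        (Set.Icc a b)) :
    (b - a) *
        (if 0 ≤ α then f a ^ (n + 1) else f a ^ ((n : ℝ) + 1 - α) * f b ^ α) *
        sInf (g '' Set.Icc a b) ^ n *
        ∏ i ∈ Finset.Icc 1 n, sInf (h i '' Set.Icc a b) ^ (n - i) +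
      (∫ x in a..b, f x ^ α * g x * ∏ i ∈ Finset.Icc 1 n, h i x) ^ n ≤
    ∫ x in a..b, f x ^ (n + 1) * g x ^ n * ∏ i ∈ Finset.Icc 1 n, h i x ^ (n - i) := by
  rw [← hIJunion] at hh_nonneg hD hgrowth ⊢
  have hh_cont : ∀ i ∈ I ∪ J, ContinuousOn (h i) (Icc a b) := by
    rcases hD with hD | hD <;> exact fun i hi => (hD i hi).1
  have hZ : ∀ k, 1 ≤ k → k ≤ n - 1 → AntitoneOn (upperWeight h I J k) (Icc a b) :=
    fun k h1 h2 => by rw [upperWeight_eq_prod_filter]; exact hii k h1 h2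
  have hW : ∀ k, 1 ≤ k → k ≤ n - 1 → MonotoneOn (lowerWeight h J k) (Icc a b) := by
    intro k h1 h2
    obtain ⟨k, rfl⟩ : ∃ m, k = m + 1 := ⟨k - 1, by omega⟩
    rw [lowerWeight_succ_eq_prod_filter]
    exact hiii k (by omega)
  have hgrowth' : ∀ x ∈ Icc a b,
      (n.factorial : ℝ) * upperWeight h I J 0 x ≤ (n + 1 - α) * chainBound f a b α n 0 x := by
    intro x hx
    rw [upperWeight_zero hIJ, chainBound, ← mul_assoc, Nat.sub_zero, Nat.cast_zero, sub_zero,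
      ← mul_one_sub]
    exact hgrowth x hx
  have hf : PosNonnegDerivsOn n f a b := ⟨hf_pos, hf_diff, hf_nonneg⟩
  refine (le_of_eq (by ring)).trans (mul_add_primitive_pow_le_integral (by omega) hab.le ?_ ?_
    fun x hx => const_add_mul_primitive_pow_mul_le (by omega) hf_pos (hf.monotoneOn hn)
      (hf.continuousOn hn) hg_cont hg_nonneg hh_nonneg hh_cont hIJ hi (Ioo_subset_Icc_self hx)
      (mul_primitive_pow_mul_prod_le hf hn hα hh_nonneg hh_cont hIJ hIJunion hZ hW hgrowth'
        (Ioo_subset_Icc_self hx)))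
  · exact ((hf.continuousOn_rpow hn α).mul hg_cont).mul (continuousOn_finsetProd _ hh_cont)
  · exact (((hf.continuousOn hn).pow _).mul (hg_cont.pow _)).mul
      (continuousOn_finsetProd _ fun i hi => (hh_cont i hi).pow _)
end

section
/- Let n ≥ 2, α ≤ n/(n-1), and let f be a strictly positive, (n-1)-times differentiable function on [a,b] with f⁽ⁱ⁾ ≥ 0 for i = 1,…,n-1. Let g be a nonnegative, continuous, increasing function on [a,b]. Set A := inf{f⁽ⁿ⁻¹⁾(x)·f(x)^{n(1-α)} : x ∈ [a,b]} and K := f(a)^{n+1} if α ≥ 0, K := f(a)^{n+1-α}·f(b)^{α} if α < 0. Then (b-a)·K·g(a)ⁿ + (n+1-α)·(A/n!)·(∫_a^b f^{α}·g)ⁿ ≤ ∫_a^b f^{n+1}·gⁿ. -/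
/-!
With `J x = ∫ t in a..x, f t ^ α`, integrate the bound `A ≤ f⁽ⁿ⁻¹⁾ f ^ (n (1 - α))` against
`J' = f ^ α` again and again. Differentiating `f⁽ⁱ⁾ f ^ E` produces, besides `f⁽ⁱ⁺¹⁾ f ^ E`, the
term `f⁽ⁱ⁾ E f ^ (E - 1) f'`, which can be dropped because the exponents
`E = n (1 - α) + k α` are nonnegative for `α ≤ n / (n - 1)`. This gives
`A J ^ k / k! ≤ f⁽ⁿ⁻¹⁻ᵏ⁾ f ^ (n (1 - α) + k α)` for `k ≤ n - 2`, and one more integration, of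
`(f ^ (n + 1 - α))'`, gives `f a ^ (n + 1 - α) + (n + 1 - α) A J ^ (n - 1) / (n - 1)! ≤
f ^ (n + 1 - α)`. Multiplied by `f ^ α`, this bounds `f ^ (n + 1)` below by
`K + (n + 1 - α) A J ^ (n - 1) f ^ α / (n - 1)!`. Finally `∫ t in a..x, f t ^ α * g t ≤ g x * J x`
because `g` increases, so the difference of the two sides of the claim, taken over `[a, x]`,
has a nonnegative derivative in `x` and vanishes at `x = a`.
-/

open Set Real intervalIntegral Topology

section Primitive

variable {a b : ℝ} {w : ℝ → ℝ}

theorem ContinuousOn.continuousOn_primitive (hw : ContinuousOn w (Icc a b)) :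
    ContinuousOn (fun x => ∫ t in a..x, w t) (Icc a b) := by
  rcases le_or_gt a b with hab | hba
  · rw [← uIcc_of_le hab] at hw ⊢
    exact continuousOn_primitive_interval' hw.intervalIntegrable left_mem_uIcc
  · simp [Icc_eq_empty_of_lt hba]

theorem ContinuousOn.hasDerivAt_primitive (hw : ContinuousOn w (Icc a b)) {x : ℝ}
    (hx : x ∈ Ioo a b) : HasDerivAt (fun y => ∫ t in a..y, w t) (w x) x :=
  integral_hasDerivAt_right
    ((hw.mono (uIcc_subset_Icc (left_mem_Icc.2 (hx.1.trans hx.2).le)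
      (Ioo_subset_Icc_self hx))).intervalIntegrable)
    (hw.stronglyMeasurableAtFilter_nhdsWithin measurableSet_Icc x |>.filter_mono
      (by rw [nhdsWithin_eq_nhds.2 (Icc_mem_nhds hx.1 hx.2)]))
    ((hw x (Ioo_subset_Icc_self hx)).continuousAt (Icc_mem_nhds hx.1 hx.2))

theorem monotoneOn_Icc_of_hasDerivAt_nonneg {u u' : ℝ → ℝ} (hu : ContinuousOn u (Icc a b))
    (hu' : ∀ x ∈ Ioo a b, HasDerivAt u (u' x) x) (h0 : ∀ x ∈ Ioo a b, 0 ≤ u' x) :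
    MonotoneOn u (Icc a b) :=
  monotoneOn_of_hasDerivWithinAt_nonneg (convex_Icc a b) hu
    (fun x hx => (hu' x (by rwa [interior_Icc] at hx)).hasDerivWithinAt)
    (fun x hx => h0 x (by rwa [interior_Icc] at hx))

theorem add_mul_primitive_pow_le {u u' : ℝ → ℝ} {C : ℝ} (k : ℕ)
    (hw : ContinuousOn w (Icc a b)) (hu : ContinuousOn u (Icc a b))
    (hu' : ∀ x ∈ Ioo a b, HasDerivAt u (u' x) x)
    (hle : ∀ x ∈ Ioo a b, C * ((k + 1) * (∫ t in a..x, w t) ^ k * w x) ≤ u' x)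
    {x : ℝ} (hx : x ∈ Icc a b) : u a + C * (∫ t in a..x, w t) ^ (k + 1) ≤ u x := by
  have hmono := monotoneOn_Icc_of_hasDerivAt_nonneg
    (u := fun y => u y - C * (∫ t in a..y, w t) ^ (k + 1))
    (hu.sub (continuousOn_const.mul (hw.continuousOn_primitive.pow (k + 1))))
    (fun y hy => (hu' y hy).fun_sub (((hw.hasDerivAt_primitive hy).pow (k + 1)).const_mul C))
    (fun y hy => by simpa using hle y hy)
  have := hmono (left_mem_Icc.2 (hx.1.trans hx.2)) hx hx.1
  simp only [integral_same, zero_pow k.succ_ne_zero, mul_zero, sub_zero] at this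
  linarith

theorem primitive_mul_le_mul_primitive {g : ℝ → ℝ} (hw : ContinuousOn w (Icc a b))
    (hw0 : ∀ x ∈ Icc a b, 0 ≤ w x) (hg : ContinuousOn g (Icc a b))
    (hg_mono : MonotoneOn g (Icc a b)) {x : ℝ} (hx : x ∈ Icc a b) :
    ∫ t in a..x, w t * g t ≤ g x * ∫ t in a..x, w t := by
  have hsub : uIcc a x ⊆ Icc a b := uIcc_subset_Icc (left_mem_Icc.2 (hx.1.trans hx.2)) hx
  calc ∫ t in a..x, w t * g t ≤ ∫ t in a..x, w t * g x := by
        refine integral_mono_on hx.1 ((hw.mul hg).mono hsub).intervalIntegrable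
          ((hw.mul continuousOn_const).mono hsub).intervalIntegrable fun t ht => ?_
        have htI : t ∈ Icc a b := ⟨ht.1, ht.2.trans hx.2⟩
        exact mul_le_mul_of_nonneg_left (hg_mono htI hx ht.2) (hw0 t htI)
    _ = g x * ∫ t in a..x, w t := by rw [integral_mul_const, mul_comm]

theorem div_factorial_mul_primitive_pow_le_mul_rpow {α E A : ℝ} {k : ℕ} {f f' h h' : ℝ → ℝ}
    (hf_pos : ∀ x ∈ Icc a b, 0 < f x) (hf : ContinuousOn f (Icc a b))
    (hf' : ∀ x ∈ Ioo a b, HasDerivAt f (f' x) x) (hf'0 : ∀ x ∈ Ioo a b, 0 ≤ f' x)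
    (hh : ContinuousOn h (Icc a b)) (hh' : ∀ x ∈ Ioo a b, HasDerivAt h (h' x) x)
    (hh0 : ∀ x ∈ Icc a b, 0 ≤ h x) (hE : 0 ≤ E)
    (hle : ∀ x ∈ Ioo a b,
      A / k.factorial * (∫ t in a..x, f t ^ α) ^ k ≤ h' x * f x ^ (E - α))
    {x : ℝ} (hx : x ∈ Icc a b) :
    A / (k + 1).factorial * (∫ t in a..x, f t ^ α) ^ (k + 1) ≤ h x * f x ^ E := by
  have hrpow (q : ℝ) : ContinuousOn (fun t => f t ^ q) (Icc a b) :=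
    hf.rpow_const fun t ht => Or.inl (hf_pos t ht).ne'
  have hfa := hf_pos a (left_mem_Icc.2 (hx.1.trans hx.2))
  have key := add_mul_primitive_pow_le (C := A / (k + 1).factorial)
    (u := fun y => h y * f y ^ E) k (hrpow α) (hh.mul (hrpow E))
    (fun y hy => (hh' y hy).mul
      ((hf' y hy).rpow_const (Or.inl (hf_pos y (Ioo_subset_Icc_self hy)).ne')))
    (fun y hy => ?_) hx
  · linarith [mul_nonneg (hh0 a (left_mem_Icc.2 (hx.1.trans hx.2))) (rpow_nonneg hfa.le E)]
  have hyI := Ioo_subset_Icc_self hy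
  have hfy := hf_pos y hyI
  calc A / (k + 1).factorial * ((k + 1) * (∫ t in a..y, f t ^ α) ^ k * f y ^ α)
      = A / k.factorial * (∫ t in a..y, f t ^ α) ^ k * f y ^ α := by
        rw [Nat.factorial_succ]; push_cast; field_simp
    _ ≤ h' y * f y ^ (E - α) * f y ^ α :=
        mul_le_mul_of_nonneg_right (hle y hy) (rpow_nonneg hfy.le _)
    _ = h' y * f y ^ E := by rw [mul_assoc, ← rpow_add hfy, sub_add_cancel]
    _ ≤ h' y * f y ^ E + h y * (f' y * E * f y ^ (E - 1)) :=
        le_add_of_nonneg_right (mul_nonneg (hh0 y hyI)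
          (mul_nonneg (mul_nonneg (hf'0 y hy) hE) (rpow_nonneg hfy.le _)))

theorem rpow_add_mul_primitive_pow_le {α p A : ℝ} {m : ℕ} {f f' : ℝ → ℝ}
    (hf_pos : ∀ x ∈ Icc a b, 0 < f x) (hf : ContinuousOn f (Icc a b))
    (hf' : ∀ x ∈ Ioo a b, HasDerivAt f (f' x) x) (hp : 0 ≤ p)
    (hle : ∀ x ∈ Ioo a b,
      A / m.factorial * (∫ t in a..x, f t ^ α) ^ m ≤ f' x * f x ^ (p - 1 - α))
    {x : ℝ} (hx : x ∈ Icc a b) :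
    f a ^ p + p * (A / (m + 1).factorial) * (∫ t in a..x, f t ^ α) ^ (m + 1) ≤ f x ^ p := by
  have hrpow (q : ℝ) : ContinuousOn (fun t => f t ^ q) (Icc a b) :=
    hf.rpow_const fun t ht => Or.inl (hf_pos t ht).ne'
  refine add_mul_primitive_pow_le m (hrpow α) (hrpow p)
    (fun y hy => (hf' y hy).rpow_const (Or.inl (hf_pos y (Ioo_subset_Icc_self hy)).ne'))
    (fun y hy => ?_) hx
  have hfy := hf_pos y (Ioo_subset_Icc_self hy)
  calc p * (A / (m + 1).factorial) * ((m + 1) * (∫ t in a..y, f t ^ α) ^ m * f y ^ α)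
      = p * (A / m.factorial * (∫ t in a..y, f t ^ α) ^ m) * f y ^ α := by
        rw [Nat.factorial_succ]; push_cast; field_simp
    _ ≤ p * (f' y * f y ^ (p - 1 - α)) * f y ^ α :=
        mul_le_mul_of_nonneg_right (mul_le_mul_of_nonneg_left (hle y hy) hp)
          (rpow_nonneg hfy.le _)
    _ = f' y * p * (f y ^ (p - 1 - α) * f y ^ α) := by ring
    _ = f' y * p * f y ^ (p - 1) := by rw [← rpow_add hfy, sub_add_cancel]

theorem integral_mul_pow_add_mul_integral_pow_le {K c : ℝ} {k : ℕ} {φ ψ g : ℝ → ℝ}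
    (hab : a ≤ b) (hφ : ContinuousOn φ (Icc a b)) (hφ0 : ∀ x ∈ Icc a b, 0 ≤ φ x)
    (hψ : ContinuousOn ψ (Icc a b)) (hg : ContinuousOn g (Icc a b))
    (hg0 : ∀ x ∈ Icc a b, 0 ≤ g x) (hg_mono : MonotoneOn g (Icc a b)) (hK : 0 ≤ K) (hc : 0 ≤ c)
    (hψ_ge : ∀ x ∈ Icc a b, K + (k + 1) * c * (∫ t in a..x, φ t) ^ k * φ x ≤ ψ x) :
    (b - a) * K * g a ^ (k + 1) + c * (∫ x in a..b, φ x * g x) ^ (k + 1) ≤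
      ∫ x in a..b, ψ x * g x ^ (k + 1) := by
  have hψg : ContinuousOn (fun x => ψ x * g x ^ (k + 1)) (Icc a b) := hψ.mul (hg.pow _)
  have key := add_mul_primitive_pow_le (C := c) (w := fun x => φ x * g x) k (hφ.mul hg)
    (u := fun x => (∫ t in a..x, ψ t * g t ^ (k + 1)) - (x - a) * (K * g a ^ (k + 1)))
    (u' := fun x => ψ x * g x ^ (k + 1) - K * g a ^ (k + 1))
    (hψg.continuousOn_primitive.sub ((continuousOn_id.sub continuousOn_const).mul
      continuousOn_const))
    (fun x hx => by
      simpa using (hψg.hasDerivAt_primitive hx).fun_sub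
        (((hasDerivAt_id x).sub_const a).mul_const (K * g a ^ (k + 1))))
    (fun x hx => ?_) (right_mem_Icc.2 hab)
  · simp only [integral_same, sub_self, zero_mul, zero_add] at key
    linarith
  have hxI := Ioo_subset_Icc_self hx
  have hI0 : 0 ≤ ∫ t in a..x, φ t * g t := integral_nonneg hx.1.le fun t ht =>
    mul_nonneg (hφ0 t ⟨ht.1, ht.2.trans hxI.2⟩) (hg0 t ⟨ht.1, ht.2.trans hxI.2⟩)
  have hIJ := primitive_mul_le_mul_primitive hφ hφ0 hg hg_mono hxI
  have hgx := hg0 x hxI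
  calc c * ((k + 1) * (∫ t in a..x, φ t * g t) ^ k * (φ x * g x))
      ≤ c * ((k + 1) * (g x * ∫ t in a..x, φ t) ^ k * (φ x * g x)) := by
        gcongr
        exact mul_nonneg (hφ0 x hxI) hgx
    _ = g x ^ (k + 1) * ((k + 1) * c * (∫ t in a..x, φ t) ^ k * φ x) := by ring
    _ ≤ g x ^ (k + 1) * (ψ x - K) := by
        gcongr
        linarith [hψ_ge x hxI]
    _ ≤ ψ x * g x ^ (k + 1) - K * g a ^ (k + 1) := by
        have : K * g a ^ (k + 1) ≤ K * g x ^ (k + 1) := by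
          gcongr
          exacts [hg0 a (left_mem_Icc.2 hab), hg_mono (left_mem_Icc.2 hab) hxI hx.1.le]
        linarith

end Primitive

theorem mul_one_sub_add_mul_nonneg_of_le_div {n k α : ℝ} (hα : α ≤ n / (n - 1)) (hn : 1 < n)
    (hk1 : 1 ≤ k) (hkn : k ≤ n) : 0 ≤ n * (1 - α) + k * α := by
  rcases le_or_gt α 0 with h | h
  · nlinarith
  · have := (le_div_iff₀ (by linarith)).mp hα
    nlinarith

theorem add_one_sub_nonneg_of_le_div {n α : ℝ} (hα : α ≤ n / (n - 1)) (hn : 2 ≤ n) :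
    0 ≤ n + 1 - α := by
  linarith [mul_one_sub_add_mul_nonneg_of_le_div hα (by linarith) (k := n - 1) (by linarith)
    (by linarith)]

theorem hasDerivAt_iteratedDerivWithin {f : ℝ → ℝ} {s : Set ℝ} {i : ℕ} {x : ℝ}
    (hf : DifferentiableOn ℝ (iteratedDerivWithin i f s) s) (hs : s ∈ 𝓝 x) :
    HasDerivAt (iteratedDerivWithin i f s) (iteratedDerivWithin (i + 1) f s x) x := by
  rw [iteratedDerivWithin_succ, derivWithin_of_mem_nhds hs]
  exact ((hf x (mem_of_mem_nhds hs)).differentiableAt hs).hasDerivAt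

section IteratedDeriv

variable {a b α A : ℝ} {f : ℝ → ℝ}

theorem continuousOn_of_differentiableOn_iteratedDerivWithin_zero
    (hf : DifferentiableOn ℝ (iteratedDerivWithin 0 f (Icc a b)) (Icc a b)) :
    ContinuousOn f (Icc a b) := by
  simpa using hf.continuousOn

theorem hasDerivAt_iteratedDerivWithin_one {x : ℝ}
    (hf : DifferentiableOn ℝ (iteratedDerivWithin 0 f (Icc a b)) (Icc a b)) (hx : x ∈ Ioo a b) :
    HasDerivAt f (iteratedDerivWithin 1 f (Icc a b) x) x := by
  simpa using hasDerivAt_iteratedDerivWithin hf (Icc_mem_nhds hx.1 hx.2)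

theorem div_factorial_mul_primitive_pow_le {β : ℝ} {m : ℕ}
    (hf_pos : ∀ x ∈ Icc a b, 0 < f x)
    (hf_diff : ∀ i ≤ m, DifferentiableOn ℝ (iteratedDerivWithin i f (Icc a b)) (Icc a b))
    (hf_nonneg : ∀ i, 1 ≤ i → i ≤ m → ∀ x ∈ Icc a b, 0 ≤ iteratedDerivWithin i f (Icc a b) x)
    (hexp : ∀ k : ℕ, 1 ≤ k → k ≤ m → 0 ≤ β + k * α)
    (hA : ∀ x ∈ Icc a b, A ≤ iteratedDerivWithin (m + 1) f (Icc a b) x * f x ^ β)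
    {k j : ℕ} (hkj : k + j = m) {x : ℝ} (hx : x ∈ Icc a b) :
    A / k.factorial * (∫ t in a..x, f t ^ α) ^ k ≤
      iteratedDerivWithin (j + 1) f (Icc a b) x * f x ^ (β + k * α) := by
  induction k generalizing j x with
  | zero => simpa [← hkj] using hA x hx
  | succ k ih =>
    have hDj := hf_diff (j + 1) (by omega)
    refine div_factorial_mul_primitive_pow_le_mul_rpow hf_pos
      (continuousOn_of_differentiableOn_iteratedDerivWithin_zero (hf_diff 0 (Nat.zero_le m)))
      (fun y => hasDerivAt_iteratedDerivWithin_one (hf_diff 0 (Nat.zero_le m)))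
      (fun y hy => hf_nonneg 1 le_rfl (by omega) y (Ioo_subset_Icc_self hy))
      hDj.continuousOn
      (fun y hy => hasDerivAt_iteratedDerivWithin hDj (Icc_mem_nhds hy.1 hy.2))
      (hf_nonneg (j + 1) le_add_self (by omega)) (hexp (k + 1) le_add_self (by omega))
      (fun y hy => ?_) hx
    convert ih (j := j + 1) (by omega) (Ioo_subset_Icc_self hy) using 3
    push_cast
    ring

theorem rpow_add_mul_primitive_pow_le_of_iteratedDerivWithin {m : ℕ}
    (hα : α ≤ ((m + 2 : ℕ) : ℝ) / (((m + 2 : ℕ) : ℝ) - 1))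
    (hf_pos : ∀ x ∈ Icc a b, 0 < f x)
    (hf_diff : ∀ i ≤ m, DifferentiableOn ℝ (iteratedDerivWithin i f (Icc a b)) (Icc a b))
    (hf_nonneg : ∀ i, 1 ≤ i → i ≤ m → ∀ x ∈ Icc a b, 0 ≤ iteratedDerivWithin i f (Icc a b) x)
    (hA : ∀ x ∈ Icc a b,
      A ≤ iteratedDerivWithin (m + 1) f (Icc a b) x * f x ^ (((m + 2 : ℕ) : ℝ) * (1 - α)))
    {x : ℝ} (hx : x ∈ Icc a b) :
    f a ^ (((m + 2 : ℕ) : ℝ) + 1 - α) + (((m + 2 : ℕ) : ℝ) + 1 - α) *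
      (A / (m + 1).factorial) * (∫ t in a..x, f t ^ α) ^ (m + 1) ≤
      f x ^ (((m + 2 : ℕ) : ℝ) + 1 - α) := by
  have hn : (2 : ℝ) ≤ ((m + 2 : ℕ) : ℝ) := by exact_mod_cast Nat.le_add_left 2 m
  have hexp (k : ℕ) (hk1 : 1 ≤ k) (hkm : k ≤ m) :
      0 ≤ ((m + 2 : ℕ) : ℝ) * (1 - α) + k * α :=
    mul_one_sub_add_mul_nonneg_of_le_div hα (by linarith) (by exact_mod_cast hk1)
      (by exact_mod_cast (by omega : k ≤ m + 2))
  refine rpow_add_mul_primitive_pow_le hf_pos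
    (continuousOn_of_differentiableOn_iteratedDerivWithin_zero (hf_diff 0 (Nat.zero_le m)))
    (fun y => hasDerivAt_iteratedDerivWithin_one (hf_diff 0 (Nat.zero_le m)))
    (add_one_sub_nonneg_of_le_div hα hn) (fun y hy => ?_) hx
  convert div_factorial_mul_primitive_pow_le hf_pos hf_diff hf_nonneg hexp hA (add_zero m)
    (Ioo_subset_Icc_self hy) using 3
  push_cast
  ring

end IteratedDeriv

theorem ite_add_mul_rpow_le {y x z α X : ℝ} {n : ℕ} (hy : 0 < y) (hyx : y ≤ x) (hxz : x ≤ z)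
    (h : y ^ ((n : ℝ) + 1 - α) + X ≤ x ^ ((n : ℝ) + 1 - α)) :
    (if 0 ≤ α then y ^ (n + 1) else y ^ ((n : ℝ) + 1 - α) * z ^ α) + X * x ^ α ≤
      x ^ (n + 1) := by
  have hx : 0 < x := hy.trans_le hyx
  have hsplit (t : ℝ) (ht : 0 < t) : t ^ (n + 1) = t ^ ((n : ℝ) + 1 - α) * t ^ α := by
    rw [← rpow_add ht, sub_add_cancel, ← rpow_natCast]; push_cast; rfl
  have hK : (if 0 ≤ α then y ^ (n + 1) else y ^ ((n : ℝ) + 1 - α) * z ^ α) ≤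
      y ^ ((n : ℝ) + 1 - α) * x ^ α := by
    split_ifs with hα
    · rw [hsplit y hy]
      gcongr
    · exact mul_le_mul_of_nonneg_left (rpow_le_rpow_of_nonpos hx hxz (not_le.1 hα).le)
        (rpow_nonneg hy.le _)
  calc _ ≤ (y ^ ((n : ℝ) + 1 - α) + X) * x ^ α := by linarith
    _ ≤ x ^ ((n : ℝ) + 1 - α) * x ^ α := by gcongr
    _ = x ^ (n + 1) := (hsplit x hx).symm

theorem stmt2 (a b : ℝ) (hab : a < b) (n : ℕ) (hn : 2 ≤ n)
    (α : ℝ) (hα : α ≤ (n : ℝ) / ((n : ℝ) - 1))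
    (f : ℝ → ℝ) (hf_pos : ∀ x ∈ Set.Icc a b, 0 < f x)
    (hf_diff : ∀ i < n - 1,
      DifferentiableOn ℝ (iteratedDerivWithin i f (Set.Icc a b)) (Set.Icc a b))
    (hf_nonneg : ∀ i, 1 ≤ i → i ≤ n - 1 → ∀ x ∈ Set.Icc a b,
      0 ≤ iteratedDerivWithin i f (Set.Icc a b) x)
    (g : ℝ → ℝ) (hg_nonneg : ∀ x ∈ Set.Icc a b, 0 ≤ g x)
    (hg_cont : ContinuousOn g (Set.Icc a b))
    (hg_mono : MonotoneOn g (Set.Icc a b)) :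
    (b - a) *
        (if 0 ≤ α then f a ^ (n + 1) else f a ^ ((n : ℝ) + 1 - α) * f b ^ α) *
        g a ^ n +
      ((n : ℝ) + 1 - α) *
        (sInf ((fun x => iteratedDerivWithin (n - 1) f (Set.Icc a b) x *
          f x ^ ((n : ℝ) * (1 - α))) '' Set.Icc a b) / (n.factorial : ℝ)) *
        (∫ x in a..b, f x ^ α * g x) ^ n ≤
    ∫ x in a..b, f x ^ (n + 1) * g x ^ n := by
  obtain ⟨m, rfl⟩ : ∃ m, n = m + 2 := ⟨n - 2, by omega⟩
  set F := fun x => iteratedDerivWithin (m + 2 - 1) f (Icc a b) x *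
    f x ^ (((m + 2 : ℕ) : ℝ) * (1 - α))
  have hF0 : ∀ x ∈ Icc a b, 0 ≤ F x := fun x hx =>
    mul_nonneg (hf_nonneg _ (by omega) le_rfl x hx) (rpow_nonneg (hf_pos x hx).le _)
  have hA : ∀ x ∈ Icc a b, sInf (F '' Icc a b) ≤ F x := fun x hx =>
    csInf_le ⟨0, forall_mem_image.2 hF0⟩ (mem_image_of_mem F hx)
  have hp : 0 ≤ ((m + 2 : ℕ) : ℝ) + 1 - α :=
    add_one_sub_nonneg_of_le_div hα (by exact_mod_cast hn)
  have hf_cont :=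
    continuousOn_of_differentiableOn_iteratedDerivWithin_zero (hf_diff 0 (by omega))
  have hf_mono : MonotoneOn f (Icc a b) := monotoneOn_Icc_of_hasDerivAt_nonneg hf_cont
    (fun x => hasDerivAt_iteratedDerivWithin_one (hf_diff 0 (by omega)))
    fun x hx => hf_nonneg 1 le_rfl (by omega) x (Ioo_subset_Icc_self hx)
  have hfa := hf_pos a (left_mem_Icc.2 hab.le)
  have hfb := hf_pos b (right_mem_Icc.2 hab.le)
  refine integral_mul_pow_add_mul_integral_pow_le (k := m + 1) (φ := fun x => f x ^ α)
    (ψ := fun x => f x ^ (m + 2 + 1)) hab.le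
    (hf_cont.rpow_const fun x hx => Or.inl (hf_pos x hx).ne')
    (fun x hx => rpow_nonneg (hf_pos x hx).le α) (hf_cont.pow _) hg_cont hg_nonneg hg_mono
    (by split_ifs
        exacts [pow_nonneg hfa.le _, mul_nonneg (rpow_nonneg hfa.le _) (rpow_nonneg hfb.le _)])
    (mul_nonneg hp (div_nonneg (Real.sInf_nonneg (forall_mem_image.2 hF0)) (Nat.cast_nonneg _)))
    (fun x hx => ?_)
  convert ite_add_mul_rpow_le hfa (hf_mono (left_mem_Icc.2 hab.le) hx hx.1)
    (hf_mono hx (right_mem_Icc.2 hab.le) hx.2)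
    (rpow_add_mul_primitive_pow_le_of_iteratedDerivWithin hα hf_pos
      (fun i hi => hf_diff i (by omega)) (fun i h1 h2 => hf_nonneg i h1 (by omega)) hA hx)
    using 2
  rw [Nat.factorial_succ]
  push_cast
  field_simp
end

section
/- Let f be a twice differentiable, strictly positive function on [a,b] with f'(a) > 0 and f'' ≥ 0, and let g be a nonnegative, continuous, increasing function on [a,b]. Then for every n ∈ ℕ (n ≥ 1): (b-a)·g(a)^{n+1}/f(b) + (f'(a))ⁿ·((n+1)^{n-1}/n!)·(∫_a^b g/f)^{n+1} ≤ (1/f(a)^{n+1})·∫_a^b fⁿ·g^{n+1}. -/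
/-!
Convexity of `f` and `f' a > 0` put `f` above its tangent `ℓ x = f a + f' a * (x - a)` and make
it increasing.
With `Φ x = ∫ t in a..x, g t / f t` and `L x = log (ℓ x / f a)`, monotonicity of `g` gives
`f' a * Φ x ≤ g x * L x`, while `(ℓ / f a) ^ (n + 1) = exp ((n + 1) * L)` is at least
`1 + ((n + 1) * L) ^ n / n!`. Together they bound `f ^ n * g ^ (n + 1) / f a ^ (n + 1)` pointwise
from below by `g a ^ (n + 1) / f b + f' a ^ n * (n + 1) ^ n / n! * Φ ^ n * Φ'`, and integrating,
with `∫ Φ ^ n * Φ' = Φ b ^ (n + 1) / (n + 1)`, gives the inequality.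
-/

open Set MeasureTheory intervalIntegral Real
open scoped Nat

theorem Real.one_add_pow_div_factorial_le_exp {x : ℝ} (hx : 0 ≤ x) {n : ℕ} (hn : n ≠ 0) :
    1 + x ^ n / n ! ≤ exp x := by
  have h1 : 1 ≤ ∑ i ∈ Finset.range n, x ^ i / i ! :=
    le_of_eq_of_le (by simp) <| Finset.single_le_sum (f := fun i => x ^ i / i !)
      (fun i _ => by positivity) (Finset.mem_range.2 (Nat.pos_of_ne_zero hn))
  calc 1 + x ^ n / n ! ≤ ∑ i ∈ Finset.range (n + 1), x ^ i / i ! := by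
        rw [Finset.sum_range_succ]; linarith
    _ ≤ exp x := sum_le_exp_of_nonneg hx _

theorem Real.one_add_pow_mul_log_pow_div_factorial_le_pow {r : ℝ} (hr : 1 ≤ r) (m : ℕ) {n : ℕ}
    (hn : n ≠ 0) : 1 + (m : ℝ) ^ n * log r ^ n / n ! ≤ r ^ m := by
  calc 1 + (m : ℝ) ^ n * log r ^ n / n ! = 1 + (m * log r) ^ n / n ! := by
        rw [mul_pow]
    _ ≤ exp (m * log r) := one_add_pow_div_factorial_le_exp (by positivity [log_nonneg hr]) hn
    _ = r ^ m := by rw [exp_nat_mul, exp_log (by linarith)]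

theorem convexOn_of_derivWithin2_nonneg {D : Set ℝ} (hD : Convex ℝ D) {f : ℝ → ℝ}
    (hf : DifferentiableOn ℝ f D) (hf' : DifferentiableOn ℝ (derivWithin f D) D)
    (hf'' : ∀ x ∈ interior D, 0 ≤ derivWithin (derivWithin f D) D x) : ConvexOn ℝ D f :=
  convexOn_of_hasDerivWithinAt2_nonneg hD hf.continuousOn
    (fun x hx => ((hf x (interior_subset hx)).hasDerivWithinAt).mono interior_subset)
    (fun x hx => ((hf' x (interior_subset hx)).hasDerivWithinAt).mono interior_subset) hf''

theorem ConvexOn.derivWithin_mul_sub_le_sub {S : Set ℝ} {f : ℝ → ℝ} (hfc : ConvexOn ℝ S f)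
    (hfd : DifferentiableOn ℝ f S) {x y : ℝ} (hx : x ∈ S) (hy : y ∈ S) (hxy : x ≤ y) :
    derivWithin f S x * (y - x) ≤ f y - f x := by
  rcases hxy.eq_or_lt with rfl | hxy
  · simp
  have := hfc.derivWithin_le_slope hx hy hxy (hfd x hx)
  rwa [slope_def_field, le_div_iff₀ (sub_pos.2 hxy)] at this

theorem integral_inv_linear {A B a x : ℝ} (hA : 0 < A) (hB : 0 < B) (hax : a ≤ x) :
    ∫ t in a..x, (A + B * (t - a))⁻¹ = log ((A + B * (x - a)) / A) / B := by
  have hℓ : 0 < A + B * (x - a) := by nlinarith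
  simp_rw [show ∀ t, A + B * (t - a) = B * t + (A - B * a) by intro t; ring]
  rw [integral_comp_mul_add (fun s => s⁻¹) hB.ne',
    integral_inv_of_pos (by linarith) (by linarith), smul_eq_mul, inv_mul_eq_div]
  congr 3; ring

theorem integral_div_le_mul_log {f g : ℝ → ℝ} {a b A B : ℝ} (hab : a ≤ b) (hA : 0 < A)
    (hB : 0 < B) (hlin : ∀ t ∈ Icc a b, A + B * (t - a) ≤ f t) (hg : ∀ t ∈ Icc a b, 0 ≤ g t)
    (hgb : ∀ t ∈ Icc a b, g t ≤ g b)
    (hint : IntervalIntegrable (fun t => g t / f t) volume a b) :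
    B * ∫ t in a..b, g t / f t ≤ g b * log ((A + B * (b - a)) / A) := by
  have hpos : ∀ t ∈ Icc a b, 0 < A + B * (t - a) := fun t ht => by nlinarith [ht.1]
  have hcont : ContinuousOn (fun t => g b * (A + B * (t - a))⁻¹) (uIcc a b) := by
    rw [uIcc_of_le hab]
    exact continuousOn_const.mul
      ((by fun_prop : Continuous _).continuousOn.inv₀ fun t ht => (hpos t ht).ne')
  calc B * ∫ t in a..b, g t / f t ≤ B * ∫ t in a..b, g b * (A + B * (t - a))⁻¹ := by
        gcongr
        refine integral_mono_on hab hint hcont.intervalIntegrable fun t ht => ?_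
        rw [← div_eq_mul_inv]
        exact div_le_div₀ (hg b ⟨hab, le_rfl⟩) (hgb t ht) (hpos t ht) (hlin t ht)
    _ = g b * log ((A + B * (b - a)) / A) := by
        rw [intervalIntegral.integral_const_mul, integral_inv_linear hA hB hab]
        field_simp

theorem continuousOn_primitive_of_continuousOn {ψ : ℝ → ℝ} {a b : ℝ} (hab : a ≤ b)
    (hψ : ContinuousOn ψ (Icc a b)) : ContinuousOn (fun x => ∫ t in a..x, ψ t) (Icc a b) := by
  rw [← uIcc_of_le hab] at hψ ⊢
  exact continuousOn_primitive_interval hψ.integrableOn_uIcc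

theorem integral_primitive_pow_mul {ψ : ℝ → ℝ} {a b : ℝ} (hab : a ≤ b)
    (hψ : ContinuousOn ψ (Icc a b)) (n : ℕ) :
    ∫ x in a..b, (∫ t in a..x, ψ t) ^ n * ψ x = (∫ t in a..b, ψ t) ^ (n + 1) / (n + 1) := by
  set Φ := fun x => ∫ t in a..x, ψ t
  have hΦ : ContinuousOn Φ (Icc a b) := continuousOn_primitive_of_continuousOn hab hψ
  have hderiv : ∀ x ∈ Ioo a b,
      HasDerivWithinAt (fun y => Φ y ^ (n + 1) / (n + 1)) (Φ x ^ n * ψ x) (Ioi x) x := by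
    intro x hx
    have hΦx : HasDerivAt Φ (ψ x) x :=
      integral_hasDerivAt_right
        ((hψ.mono (Icc_subset_Icc le_rfl hx.2.le)).intervalIntegrable_of_Icc hx.1.le)
        ((hψ.mono Ioo_subset_Icc_self).stronglyMeasurableAtFilter isOpen_Ioo x hx)
        (hψ.continuousAt (Icc_mem_nhds hx.1 hx.2))
    refine (((hΦx.fun_pow (n + 1)).div_const ((n : ℝ) + 1)).hasDerivWithinAt).congr_deriv ?_
    push_cast
    field_simp
  rw [integral_eq_sub_of_hasDeriv_right_of_le hab ((hΦ.pow (n + 1)).div_const _) hderiv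
    (((hΦ.pow n).mul hψ).intervalIntegrable_of_Icc hab)]
  simp [Φ]

theorem integrand_le_of_linear_minorant {f g : ℝ → ℝ} {a b A B : ℝ} (hA : 0 < A) (hB : 0 < B)
    (hlin : ∀ t ∈ Icc a b, A + B * (t - a) ≤ f t) (hfb : ∀ t ∈ Icc a b, f t ≤ f b)
    (hg : ∀ t ∈ Icc a b, 0 ≤ g t) (hg_mono : MonotoneOn g (Icc a b))
    (hψ : ContinuousOn (fun t => g t / f t) (Icc a b)) {n : ℕ} (hn : n ≠ 0) {x : ℝ}
    (hx : x ∈ Icc a b) :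
    g a ^ (n + 1) / f b +
        B ^ n * ((n + 1) ^ n / n !) * ((∫ t in a..x, g t / f t) ^ n * (g x / f x)) ≤
      1 / A ^ (n + 1) * (f x ^ n * g x ^ (n + 1)) := by
  have ha : a ∈ Icc a b := ⟨le_rfl, hx.1.trans hx.2⟩
  have hpos : ∀ t ∈ Icc a b, 0 < f t := fun t ht => by nlinarith [hlin t ht, ht.1]
  have hsub : Icc a x ⊆ Icc a b := Icc_subset_Icc le_rfl hx.2
  have hℓ : A ≤ A + B * (x - a) := by nlinarith [hx.1]
  set Φ := ∫ t in a..x, g t / f t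
  set L := log ((A + B * (x - a)) / A)
  have hΦ : 0 ≤ Φ :=
    integral_nonneg hx.1 fun t ht => div_nonneg (hg t (hsub ht)) (hpos t (hsub ht)).le
  have hΦL : B * Φ ≤ g x * L :=
    integral_div_le_mul_log hx.1 hA hB (fun t ht => hlin t (hsub ht)) (fun t ht => hg t (hsub ht))
      (fun t ht => hg_mono (hsub ht) hx ht.2) ((hψ.mono hsub).intervalIntegrable_of_Icc hx.1)
  have hkey : 1 + (n + 1) ^ n * L ^ n / n ! ≤ f x ^ (n + 1) / A ^ (n + 1) :=
    calc 1 + (n + 1) ^ n * L ^ n / n ! ≤ ((A + B * (x - a)) / A) ^ (n + 1) := by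
          exact_mod_cast
            one_add_pow_mul_log_pow_div_factorial_le_pow ((one_le_div hA).2 hℓ) (n + 1) hn
      _ ≤ f x ^ (n + 1) / A ^ (n + 1) := by
          rw [div_pow]
          gcongr
          exacts [hA.le.trans hℓ, hlin x hx]
  have hfx := hpos x hx
  have hgx := hg x hx
  calc g a ^ (n + 1) / f b + B ^ n * ((n + 1) ^ n / n !) * (Φ ^ n * (g x / f x))
      = g a ^ (n + 1) / f b + (n + 1) ^ n / n ! * ((B * Φ) ^ n * (g x / f x)) := by ring
    _ ≤ g x ^ (n + 1) / f x + (n + 1) ^ n / n ! * ((g x * L) ^ n * (g x / f x)) := by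
        gcongr
        · exact hg a ha
        · exact hg_mono ha hx hx.1
        · exact hfb x hx
    _ = (1 + (n + 1) ^ n * L ^ n / n !) * (g x ^ (n + 1) / f x) := by ring
    _ ≤ f x ^ (n + 1) / A ^ (n + 1) * (g x ^ (n + 1) / f x) := by gcongr
    _ = 1 / A ^ (n + 1) * (f x ^ n * g x ^ (n + 1)) := by field_simp; ring

theorem integral_inequality_of_linear_minorant {f g : ℝ → ℝ} {a b A B : ℝ} (hab : a ≤ b)
    (hA : 0 < A) (hB : 0 < B) (hf : ContinuousOn f (Icc a b))
    (hlin : ∀ x ∈ Icc a b, A + B * (x - a) ≤ f x) (hfb : ∀ x ∈ Icc a b, f x ≤ f b)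
    (hg : ∀ x ∈ Icc a b, 0 ≤ g x) (hg_cont : ContinuousOn g (Icc a b))
    (hg_mono : MonotoneOn g (Icc a b)) {n : ℕ} (hn : n ≠ 0) :
    (b - a) * g a ^ (n + 1) / f b +
      B ^ n * (((n : ℝ) + 1) ^ (n - 1) / (n ! : ℝ)) * (∫ x in a..b, g x / f x) ^ (n + 1) ≤
    (1 / A ^ (n + 1)) * ∫ x in a..b, f x ^ n * g x ^ (n + 1) := by
  have hψ : ContinuousOn (fun x => g x / f x) (Icc a b) :=
    hg_cont.div hf fun x hx => (lt_of_lt_of_le (by nlinarith [hx.1]) (hlin x hx)).ne'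
  have hprod :
      IntervalIntegrable (fun x => (∫ t in a..x, g t / f t) ^ n * (g x / f x)) volume a b :=
    (((continuousOn_primitive_of_continuousOn hab hψ).pow n).mul hψ).intervalIntegrable_of_Icc hab
  have hconst : ((n : ℝ) + 1) ^ (n - 1) = (n + 1) ^ n / (n + 1) := by
    rw [eq_div_iff (by positivity), ← pow_succ, Nat.sub_add_cancel (Nat.pos_of_ne_zero hn)]
  calc (b - a) * g a ^ (n + 1) / f b +
        B ^ n * (((n : ℝ) + 1) ^ (n - 1) / n !) * (∫ x in a..b, g x / f x) ^ (n + 1)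
      = ∫ x in a..b, (g a ^ (n + 1) / f b + B ^ n * ((n + 1) ^ n / n !) *
          ((∫ t in a..x, g t / f t) ^ n * (g x / f x))) := by
        rw [integral_add intervalIntegrable_const (hprod.const_mul _),
          intervalIntegral.integral_const, intervalIntegral.integral_const_mul,
          integral_primitive_pow_mul hab hψ, hconst, smul_eq_mul]
        ring
    _ ≤ ∫ x in a..b, 1 / A ^ (n + 1) * (f x ^ n * g x ^ (n + 1)) :=
        integral_mono_on hab (intervalIntegrable_const.add (hprod.const_mul _))
          ((((hf.pow n).mul (hg_cont.pow (n + 1))).intervalIntegrable_of_Icc hab).const_mul _)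
          fun x hx => integrand_le_of_linear_minorant hA hB hlin hfb hg hg_mono hψ hn hx
    _ = (1 / A ^ (n + 1)) * ∫ x in a..b, f x ^ n * g x ^ (n + 1) :=
        intervalIntegral.integral_const_mul _ _

theorem stmt7 (a b : ℝ) (hab : a < b)
    (f : ℝ → ℝ)
    (hf_diff : DifferentiableOn ℝ f (Set.Icc a b))
    (hf_diff2 : DifferentiableOn ℝ (derivWithin f (Set.Icc a b)) (Set.Icc a b))
    (hf_pos : ∀ x ∈ Set.Icc a b, 0 < f x)
    (hf'a : 0 < derivWithin f (Set.Icc a b) a)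
    (hf''_nonneg : ∀ x ∈ Set.Icc a b,
      0 ≤ derivWithin (derivWithin f (Set.Icc a b)) (Set.Icc a b) x)
    (g : ℝ → ℝ) (hg_nonneg : ∀ x ∈ Set.Icc a b, 0 ≤ g x)
    (hg_cont : ContinuousOn g (Set.Icc a b))
    (hg_mono : MonotoneOn g (Set.Icc a b))
    (n : ℕ) (hn : 1 ≤ n) :
    (b - a) * g a ^ (n + 1) / f b +
      derivWithin f (Set.Icc a b) a ^ n *
        (((n : ℝ) + 1) ^ (n - 1) / (n.factorial : ℝ)) *
        (∫ x in a..b, g x / f x) ^ (n + 1) ≤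
    (1 / f a ^ (n + 1)) * ∫ x in a..b, f x ^ n * g x ^ (n + 1) := by
  have ha : a ∈ Icc a b := left_mem_Icc.2 hab.le
  have hb : b ∈ Icc a b := right_mem_Icc.2 hab.le
  have hconv : ConvexOn ℝ (Icc a b) f := convexOn_of_derivWithin2_nonneg (convex_Icc a b) hf_diff
    hf_diff2 fun x hx => hf''_nonneg x (interior_subset hx)
  have hlin : ∀ x ∈ Icc a b, f a + derivWithin f (Icc a b) a * (x - a) ≤ f x := fun x hx => by
    linarith [hconv.derivWithin_mul_sub_le_sub hf_diff ha hx hx.1]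
  have hfb : ∀ x ∈ Icc a b, f x ≤ f b := fun x hx => by
    have htangent := hconv.derivWithin_mul_sub_le_sub hf_diff hx hb hx.2
    have hslope := hconv.monotoneOn_derivWithin hf_diff ha hx hx.1
    nlinarith [hx.2]
  exact integral_inequality_of_linear_minorant hab.le (hf_pos a ha) hf'a hf_diff.continuousOn hlin
    hfb hg_nonneg hg_cont hg_mono (by omega)
end

section
/- Let f be a twice differentiable, strictly positive function on [a,b] with f'(a) > 0 and f'' ≥ 0, and let g be a nonnegative, continuous, increasing function on [a,b]. Then ∫_a^b g/f ≤ (1/(e·f(a)·f'(a)))·liminf_{n→∞} (∫_a^b fⁿ·g^{n+1})^{1/(n+1)} ≤ (1/(e·f(a)·f'(a)))·limsup_{n→∞} (∫_a^b fⁿ·g^{n+1})^{1/(n+1)} ≤ f(b)·g(b)/(e·f(a)·f'(a)). -/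
/-!
Convexity puts `f` above its tangent line `f a + f'(a) (x - a)`, so
`∫ g / f ≤ g b ∫ dx / (f a + f'(a) (x - a)) = g b log (1 + f'(a) (b - a) / f a) / f'(a)`,
and `log y ≤ y / e` bounds this by `f b g b / (e f a f'(a))`. On the other hand
`∫ fⁿ gⁿ⁺¹ = ∫ (f g)ⁿ⁺¹ / f` is the `(n+1)`-th power of an `Lⁿ⁺¹` norm of the increasing function
`f g` for the positive weight `1 / f`, so its `(n+1)`-th root tends to `max (f g) = f b g b`.
-/

open Filter Topology Set Real MeasureTheory

lemma Real.log_le_div_exp_one {x : ℝ} (hx : 0 < x) : log x ≤ x / exp 1 := by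
  have := add_one_le_exp (log x - 1)
  rwa [sub_add_cancel, exp_sub, exp_log hx] at this

lemma DifferentiableOn.hasDerivWithinAt_Ioo {f : ℝ → ℝ} {a b x : ℝ}
    (hf : DifferentiableOn ℝ f (Icc a b)) (hx : x ∈ Ioo a b) :
    HasDerivWithinAt f (derivWithin f (Icc a b) x) (Ioo a b) x :=
  (hf x (Ioo_subset_Icc_self hx)).hasDerivWithinAt.mono Ioo_subset_Icc_self

lemma convexOn_Icc_of_derivWithin2_nonneg {f : ℝ → ℝ} {a b : ℝ}
    (hf : DifferentiableOn ℝ f (Icc a b))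
    (hf' : DifferentiableOn ℝ (derivWithin f (Icc a b)) (Icc a b))
    (hf'' : ∀ x ∈ Ioo a b, 0 ≤ derivWithin (derivWithin f (Icc a b)) (Icc a b) x) :
    ConvexOn ℝ (Icc a b) f := by
  refine convexOn_of_hasDerivWithinAt2_nonneg (f' := derivWithin f (Icc a b))
    (f'' := derivWithin (derivWithin f (Icc a b)) (Icc a b)) (convex_Icc a b) hf.continuousOn
    ?_ ?_ ?_ <;> rw [interior_Icc]
  exacts [fun x hx => hf.hasDerivWithinAt_Ioo hx,
    fun x hx => hf'.hasDerivWithinAt_Ioo hx, hf'']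

lemma ConvexOn.add_derivWithin_mul_sub_le {S : Set ℝ} {f : ℝ → ℝ} {x y : ℝ}
    (hfc : ConvexOn ℝ S f) (hx : x ∈ S) (hy : y ∈ S) (hxy : x ≤ y)
    (hfd : DifferentiableWithinAt ℝ f S x) :
    f x + derivWithin f S x * (y - x) ≤ f y := by
  rcases hxy.eq_or_lt with rfl | hlt
  · simp
  have hslope := hfc.derivWithin_le_slope hx hy hlt hfd
  rw [slope_def_field, le_div_iff₀ (sub_pos.2 hlt)] at hslope
  linarith

lemma integral_inv_add_mul_sub {a b c m : ℝ} (hab : a ≤ b) (hc : 0 < c) (hm : 0 < m) :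
    ∫ x in a..b, (c + m * (x - a))⁻¹ = log ((c + m * (b - a)) / c) / m := by
  have hshift : ∀ x, c + m * (x - a) = m * x + (c - m * a) := fun x => by ring
  simp only [hshift]
  rw [intervalIntegral.integral_comp_mul_add (fun y => y⁻¹) hm.ne', integral_inv, smul_eq_mul,
    ← hshift, ← hshift]
  · simp [div_eq_inv_mul]
  · rw [← hshift, ← hshift, sub_self, mul_zero, add_zero, uIcc_of_le (by nlinarith)]
    exact fun h => hc.not_ge h.1

lemma integral_div_le_of_affine_le {f g : ℝ → ℝ} {a b c m : ℝ} (hab : a ≤ b) (hc : 0 < c)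
    (hm : 0 < m) (hf : ContinuousOn f (Icc a b)) (hg : ContinuousOn g (Icc a b))
    (hg₀ : ∀ x ∈ Icc a b, 0 ≤ g x) (hg_mono : MonotoneOn g (Icc a b))
    (hf_ge : ∀ x ∈ Icc a b, c + m * (x - a) ≤ f x) :
    ∫ x in a..b, g x / f x ≤ f b * g b / (exp 1 * c * m) := by
  have hbI : b ∈ Icc a b := right_mem_Icc.2 hab
  have hline : ∀ x ∈ Icc a b, 0 < c + m * (x - a) := fun x hx =>
    add_pos_of_pos_of_nonneg hc (mul_nonneg hm.le (sub_nonneg.2 hx.1))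
  calc ∫ x in a..b, g x / f x
      ≤ ∫ x in a..b, g b * (c + m * (x - a))⁻¹ := by
        refine intervalIntegral.integral_mono_on hab ?_ ?_ fun x hx => ?_
        · refine ContinuousOn.intervalIntegrable_of_Icc hab (hg.div hf fun x hx => ?_)
          exact ((hline x hx).trans_le (hf_ge x hx)).ne'
        · refine ContinuousOn.intervalIntegrable_of_Icc hab (continuousOn_const.mul ?_)
          exact (ContinuousOn.inv₀ (by fun_prop) fun x hx => (hline x hx).ne')
        · rw [← div_eq_mul_inv]
          exact div_le_div₀ (hg₀ b hbI) (hg_mono hx hbI hx.2) (hline x hx) (hf_ge x hx)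
    _ = g b * (log ((c + m * (b - a)) / c) / m) := by
        rw [intervalIntegral.integral_const_mul, integral_inv_add_mul_sub hab hc hm]
    _ ≤ g b * ((c + m * (b - a)) / c / exp 1 / m) := by
        gcongr
        · exact hg₀ b hbI
        · exact log_le_div_exp_one (div_pos (hline b hbI) hc)
    _ ≤ g b * (f b / c / exp 1 / m) := by
        gcongr
        · exact hg₀ b hbI
        · exact hf_ge b hbI
    _ = f b * g b / (exp 1 * c * m) := by
        field_simp

lemma tendsto_mul_pow_succ_rpow_one_div {C M : ℝ} (hC : 0 < C) (hM : 0 ≤ M) :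
    Tendsto (fun n : ℕ => (C * M ^ (n + 1)) ^ (1 / ((n : ℝ) + 1))) atTop (𝓝 M) := by
  have hroot (n : ℕ) :
      (C * M ^ (n + 1)) ^ (1 / ((n : ℝ) + 1)) = C ^ (1 / ((n : ℝ) + 1)) * M := by
    rw [mul_rpow hC.le (by positivity), one_div, ← Nat.cast_succ,
      pow_rpow_inv_natCast hM n.succ_ne_zero]
  have hC1 : Tendsto (fun n : ℕ => C ^ (1 / ((n : ℝ) + 1))) atTop (𝓝 1) := by
    simpa [Function.comp_def] using ((continuous_const_rpow hC.ne').tendsto 0).comp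
      tendsto_one_div_add_atTop_nhds_zero_nat
  simpa only [hroot, one_mul] using hC1.mul_const M

lemma eventually_rpow_one_div_lt {I : ℕ → ℝ} {C M U : ℝ} (hC : 0 < C) (hM : 0 ≤ M)
    (hMU : M < U) (hI₀ : ∀ n, 0 ≤ I n) (hI : ∀ n, I n ≤ C * M ^ (n + 1)) :
    ∀ᶠ n : ℕ in atTop, I n ^ (1 / ((n : ℝ) + 1)) < U := by
  filter_upwards [(tendsto_mul_pow_succ_rpow_one_div hC hM).eventually (gt_mem_nhds hMU)]
    with n hn
  exact (rpow_le_rpow (hI₀ n) (hI n) (by positivity)).trans_lt hn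

lemma eventually_lt_rpow_one_div {I : ℕ → ℝ} {C M L : ℝ} (hC : 0 < C) (hM : 0 ≤ M)
    (hLM : L < M) (hI : ∀ n, C * M ^ (n + 1) ≤ I n) :
    ∀ᶠ n : ℕ in atTop, L < I n ^ (1 / ((n : ℝ) + 1)) := by
  filter_upwards [(tendsto_mul_pow_succ_rpow_one_div hC hM).eventually (lt_mem_nhds hLM)]
    with n hn
  exact hn.trans_le (rpow_le_rpow (by positivity) (hI n) (by positivity))

lemma exists_Icc_subset_forall_lt {φ : ℝ → ℝ} {a b c ℓ : ℝ} (hab : a < b) (hc : c ∈ Icc a b)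
    (hφ : ContinuousWithinAt φ (Icc a b) c) (hℓ : ℓ < φ c) :
    ∃ p q, p < q ∧ Icc p q ⊆ Icc a b ∧ ∀ x ∈ Icc p q, ℓ < φ x := by
  obtain ⟨δ, hδ, hball⟩ := Metric.mem_nhdsWithin_iff.1 (hφ (lt_mem_nhds hℓ))
  have hsub : Icc (max a (c - δ / 2)) (min b (c + δ / 2)) ⊆ Icc a b :=
    Icc_subset_Icc (le_max_left _ _) (min_le_left _ _)
  refine ⟨max a (c - δ / 2), min b (c + δ / 2), ?_, hsub, fun x hx => hball ⟨?_, hsub hx⟩⟩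
  · simp only [max_lt_iff, lt_min_iff]
    refine ⟨⟨hab, ?_⟩, ?_, ?_⟩ <;> linarith [hc.1, hc.2]
  · simp only [mem_Icc, max_le_iff, le_min_iff] at hx
    rw [Metric.mem_ball, Real.dist_eq, abs_lt]
    constructor <;> linarith

lemma integral_pow_succ_mul_nonneg {φ w : ℝ → ℝ} {a b : ℝ} (hab : a ≤ b)
    (hφ₀ : ∀ x ∈ Icc a b, 0 ≤ φ x) (hw₀ : ∀ x ∈ Icc a b, 0 < w x) (n : ℕ) :
    0 ≤ ∫ x in a..b, φ x ^ (n + 1) * w x :=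
  intervalIntegral.integral_nonneg hab fun x hx =>
    mul_nonneg (pow_nonneg (hφ₀ x hx) _) (hw₀ x hx).le

lemma eventually_lt_rpow_integral_pow_succ_mul {φ w : ℝ → ℝ} {a b c L : ℝ} (hab : a < b)
    (hc : c ∈ Icc a b) (hφ : ContinuousOn φ (Icc a b)) (hw : ContinuousOn w (Icc a b))
    (hφ₀ : ∀ x ∈ Icc a b, 0 ≤ φ x) (hw₀ : ∀ x ∈ Icc a b, 0 < w x) (hL : L < φ c) :
    ∀ᶠ n : ℕ in atTop, L < (∫ x in a..b, φ x ^ (n + 1) * w x) ^ (1 / ((n : ℝ) + 1)) := by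
  rcases lt_or_ge L 0 with hL₀ | hL₀
  · exact Eventually.of_forall fun n =>
      hL₀.trans_le (rpow_nonneg (integral_pow_succ_mul_nonneg hab.le hφ₀ hw₀ n) _)
  obtain ⟨ℓ, hLℓ, hℓc⟩ := exists_between hL
  obtain ⟨p, q, hpq, hsub, hφℓ⟩ := exists_Icc_subset_forall_lt hab hc (hφ c hc) hℓc
  obtain ⟨xmin, hxmin, hwmin⟩ := isCompact_Icc.exists_isMinOn (nonempty_Icc.2 hab.le) hw
  refine eventually_lt_rpow_one_div (mul_pos (sub_pos.2 hpq) (hw₀ xmin hxmin))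
    (hL₀.trans hLℓ.le) hLℓ fun n => ?_
  have hint : IntervalIntegrable (fun x => φ x ^ (n + 1) * w x) volume a b :=
    ContinuousOn.intervalIntegrable_of_Icc hab.le ((hφ.pow _).mul hw)
  calc (q - p) * w xmin * ℓ ^ (n + 1)
      = ∫ _ in p..q, ℓ ^ (n + 1) * w xmin := by
        rw [intervalIntegral.integral_const, smul_eq_mul]; ring
    _ ≤ ∫ x in p..q, φ x ^ (n + 1) * w x := by
      refine intervalIntegral.integral_mono_on hpq.le intervalIntegrable_const
        (hint.mono_set ?_) fun x hx => ?_
      · rwa [uIcc_of_le hpq.le, uIcc_of_le hab.le]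
      · exact mul_le_mul (pow_le_pow_left₀ (hL₀.trans hLℓ.le) (hφℓ x hx).le _)
          (hwmin (hsub hx)) (hw₀ xmin hxmin).le (pow_nonneg (hφ₀ x (hsub hx)) _)
    _ ≤ ∫ x in a..b, φ x ^ (n + 1) * w x := by
      refine intervalIntegral.integral_mono_interval (hsub (left_mem_Icc.2 hpq.le)).1 hpq.le
        (hsub (right_mem_Icc.2 hpq.le)).2 ?_ hint
      exact (ae_restrict_mem measurableSet_Ioc).mono fun x hx =>
        mul_nonneg (pow_nonneg (hφ₀ x (Ioc_subset_Icc_self hx)) _)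
          (hw₀ x (Ioc_subset_Icc_self hx)).le

lemma IsMaxOn.eventually_rpow_integral_pow_succ_mul_lt {φ w : ℝ → ℝ} {a b c U : ℝ}
    (hmax : IsMaxOn φ (Icc a b) c) (hc : c ∈ Icc a b) (hab : a < b)
    (hφ : ContinuousOn φ (Icc a b)) (hw : ContinuousOn w (Icc a b))
    (hφ₀ : ∀ x ∈ Icc a b, 0 ≤ φ x) (hw₀ : ∀ x ∈ Icc a b, 0 < w x) (hU : φ c < U) :
    ∀ᶠ n : ℕ in atTop, (∫ x in a..b, φ x ^ (n + 1) * w x) ^ (1 / ((n : ℝ) + 1)) < U := by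
  obtain ⟨xmax, hxmax, hwmax⟩ := isCompact_Icc.exists_isMaxOn (nonempty_Icc.2 hab.le) hw
  refine eventually_rpow_one_div_lt (mul_pos (sub_pos.2 hab) (hw₀ xmax hxmax)) (hφ₀ c hc) hU
    (integral_pow_succ_mul_nonneg hab.le hφ₀ hw₀) fun n => ?_
  calc ∫ x in a..b, φ x ^ (n + 1) * w x
      ≤ ∫ _ in a..b, φ c ^ (n + 1) * w xmax := by
        refine intervalIntegral.integral_mono_on hab.le
          (ContinuousOn.intervalIntegrable_of_Icc hab.le ((hφ.pow _).mul hw))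
          intervalIntegrable_const fun x hx => ?_
        exact mul_le_mul (pow_le_pow_left₀ (hφ₀ x hx) (hmax hx) _) (hwmax hx) (hw₀ x hx).le
          (pow_nonneg (hφ₀ c hc) _)
    _ = (b - a) * w xmax * φ c ^ (n + 1) := by
        rw [intervalIntegral.integral_const, smul_eq_mul]; ring

theorem IsMaxOn.tendsto_rpow_integral_pow_succ_mul {φ w : ℝ → ℝ} {a b c : ℝ}
    (hmax : IsMaxOn φ (Icc a b) c) (hc : c ∈ Icc a b) (hab : a < b)
    (hφ : ContinuousOn φ (Icc a b)) (hw : ContinuousOn w (Icc a b))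
    (hφ₀ : ∀ x ∈ Icc a b, 0 ≤ φ x) (hw₀ : ∀ x ∈ Icc a b, 0 < w x) :
    Tendsto (fun n : ℕ => (∫ x in a..b, φ x ^ (n + 1) * w x) ^ (1 / ((n : ℝ) + 1)))
      atTop (𝓝 (φ c)) :=
  tendsto_order.2
    ⟨fun _ hL => eventually_lt_rpow_integral_pow_succ_mul hab hc hφ hw hφ₀ hw₀ hL,
      fun _ hU => hmax.eventually_rpow_integral_pow_succ_mul_lt hc hab hφ hw hφ₀ hw₀ hU⟩

theorem stmt8 (a b : ℝ) (hab : a < b)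
    (f : ℝ → ℝ)
    (hf_diff : DifferentiableOn ℝ f (Set.Icc a b))
    (hf_diff2 : DifferentiableOn ℝ (derivWithin f (Set.Icc a b)) (Set.Icc a b))
    (hf_pos : ∀ x ∈ Set.Icc a b, 0 < f x)
    (hf'a : 0 < derivWithin f (Set.Icc a b) a)
    (hf''_nonneg : ∀ x ∈ Set.Icc a b,
      0 ≤ derivWithin (derivWithin f (Set.Icc a b)) (Set.Icc a b) x)
    (g : ℝ → ℝ) (hg_nonneg : ∀ x ∈ Set.Icc a b, 0 ≤ g x)
    (hg_cont : ContinuousOn g (Set.Icc a b))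
    (hg_mono : MonotoneOn g (Set.Icc a b)) :
    (∫ x in a..b, g x / f x) ≤
        (1 / (Real.exp 1 * f a * derivWithin f (Set.Icc a b) a)) *
          atTop.liminf (fun n : ℕ =>
            (∫ x in a..b, f x ^ n * g x ^ (n + 1)) ^ (1 / ((n : ℝ) + 1))) ∧
      (1 / (Real.exp 1 * f a * derivWithin f (Set.Icc a b) a)) *
          atTop.liminf (fun n : ℕ =>
            (∫ x in a..b, f x ^ n * g x ^ (n + 1)) ^ (1 / ((n : ℝ) + 1))) ≤
        (1 / (Real.exp 1 * f a * derivWithin f (Set.Icc a b) a)) *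
          atTop.limsup (fun n : ℕ =>
            (∫ x in a..b, f x ^ n * g x ^ (n + 1)) ^ (1 / ((n : ℝ) + 1))) ∧
      (1 / (Real.exp 1 * f a * derivWithin f (Set.Icc a b) a)) *
          atTop.limsup (fun n : ℕ =>
            (∫ x in a..b, f x ^ n * g x ^ (n + 1)) ^ (1 / ((n : ℝ) + 1))) ≤
        f b * g b / (Real.exp 1 * f a * derivWithin f (Set.Icc a b) a) := by
  have haI : a ∈ Icc a b := left_mem_Icc.2 hab.le
  have hbI : b ∈ Icc a b := right_mem_Icc.2 hab.le
  have hconvex := convexOn_Icc_of_derivWithin2_nonneg hf_diff hf_diff2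
    fun x hx => hf''_nonneg x (Ioo_subset_Icc_self hx)
  have htangent : ∀ x ∈ Icc a b, f a + derivWithin f (Icc a b) a * (x - a) ≤ f x :=
    fun x hx => hconvex.add_derivWithin_mul_sub_le haI hx hx.1 (hf_diff a haI)
  have hintegral := integral_div_le_of_affine_le hab.le (hf_pos a haI) hf'a
    hf_diff.continuousOn hg_cont hg_nonneg hg_mono htangent
  have hfab : f a ≤ f b :=
    (le_add_of_nonneg_right (mul_nonneg hf'a.le (sub_nonneg.2 hab.le))).trans (htangent b hbI)
  have hmax : IsMaxOn (fun x => f x * g x) (Icc a b) b := fun x hx =>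
    mul_le_mul ((hconvex.le_max_of_mem_Icc haI hbI hx).trans (max_le hfab le_rfl))
      (hg_mono hx hbI hx.2) (hg_nonneg x hx) (hf_pos b hbI).le
  have hpow : ∀ n : ℕ, ∫ x in a..b, f x ^ n * g x ^ (n + 1) =
      ∫ x in a..b, (f x * g x) ^ (n + 1) * (f x)⁻¹ := fun n =>
    intervalIntegral.integral_congr fun x hx => by
      rw [uIcc_of_le hab.le] at hx
      field_simp [(hf_pos x hx).ne']
      ring
  have hlim := hmax.tendsto_rpow_integral_pow_succ_mul (w := fun x => (f x)⁻¹) hbI hab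
    (hf_diff.continuousOn.mul hg_cont) (hf_diff.continuousOn.inv₀ fun x hx => (hf_pos x hx).ne')
    (fun x hx => mul_nonneg (hf_pos x hx).le (hg_nonneg x hx)) fun x hx => inv_pos.2 (hf_pos x hx)
  simp only [← hpow] at hlim
  rw [hlim.liminf_eq, hlim.limsup_eq]
  exact ⟨hintegral.trans_eq (by ring), le_rfl, le_of_eq (by ring)⟩
end

section
/- Let f : [a,b] → ℝ be a strictly positive, differentiable function such that f' is increasing and f'(a) > 0, and let g : [a,b] → ℝ be increasing and nonnegative. Then ∫_a^b g/f ≤ (g(b)/f'(a))·log(f(b)/f(a)) ≤ f(b)·g(b)/(e·f(a)·f'(a)). -/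
/-! Since `f'` is increasing and `g` is increasing and nonnegative, on `[a,b]` we have
`g x / f x ≤ (g b / f'(a)) · f'(x) / f(x)`, and `f'/f` integrates to `log (f b / f a)`.
The second inequality is `log t ≤ t / e`, i.e. `e · s ≤ exp s` at `s = log t`. -/

open Set MeasureTheory

theorem Real.log_le_div_exp_one_s9 {t : ℝ} (ht : 0 < t) : Real.log t ≤ t / Real.exp 1 := by
  rw [le_div_iff₀ (Real.exp_pos 1), mul_comm]
  simpa [Real.exp_log ht] using Real.exp_one_mul_le_exp (x := Real.log t)

theorem MonotoneOn.intervalIntegrable_div {u f : ℝ → ℝ} {a b : ℝ} (hab : a ≤ b)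
    (hu : MonotoneOn u (Icc a b)) (hf : ContinuousOn f (Icc a b))
    (hf₀ : ∀ x ∈ Icc a b, f x ≠ 0) :
    IntervalIntegrable (fun x => u x / f x) volume a b := by
  rw [← uIcc_of_le hab] at hu hf hf₀
  simpa only [div_eq_mul_inv] using
    hu.intervalIntegrable.mul_continuousOn (g := fun x => (f x)⁻¹) (hf.inv₀ hf₀)

theorem integral_derivWithin_div_eq_log_div {f : ℝ → ℝ} {a b : ℝ} (hab : a ≤ b)
    (hf_pos : ∀ x ∈ Icc a b, 0 < f x) (hf : DifferentiableOn ℝ f (Icc a b))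
    (hint : IntervalIntegrable (fun x => derivWithin f (Icc a b) x / f x) volume a b) :
    ∫ x in a..b, derivWithin f (Icc a b) x / f x = Real.log (f b / f a) := by
  have hfa := hf_pos a (left_mem_Icc.2 hab)
  have hfb := hf_pos b (right_mem_Icc.2 hab)
  rw [Real.log_div hfb.ne' hfa.ne']
  refine intervalIntegral.integral_eq_sub_of_hasDeriv_right_of_le hab
    (hf.continuousOn.log fun x hx => (hf_pos x hx).ne') (fun x hx => ?_) hint
  have hx' : x ∈ Icc a b := Ioo_subset_Icc_self hx
  exact ((hf x hx').hasDerivWithinAt.log (hf_pos x hx').ne').mono_of_mem_nhdsWithin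
    (Icc_mem_nhdsGT_of_mem ⟨hx.1.le, hx.2⟩)

theorem div_le_div_mul_div_of_le {gx gb fx f'a f'x : ℝ} (hgx : gx ≤ gb) (hgb : 0 ≤ gb)
    (hfx : 0 < fx) (hf'a : 0 < f'a) (hf' : f'a ≤ f'x) :
    gx / fx ≤ gb / f'a * (f'x / fx) := by
  have h : gx ≤ gb * (f'x / f'a) :=
    hgx.trans (le_mul_of_one_le_right hgb ((one_le_div hf'a).2 hf'))
  calc gx / fx ≤ gb * (f'x / f'a) / fx := div_le_div_of_nonneg_right h hfx.le
    _ = gb / f'a * (f'x / fx) := by ring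

theorem integral_div_le_div_derivWithin_mul_log {f g : ℝ → ℝ} {a b : ℝ} (hab : a ≤ b)
    (hf_pos : ∀ x ∈ Icc a b, 0 < f x) (hf_diff : DifferentiableOn ℝ f (Icc a b))
    (hf'_mono : MonotoneOn (derivWithin f (Icc a b)) (Icc a b))
    (hf'a : 0 < derivWithin f (Icc a b) a)
    (hg_mono : MonotoneOn g (Icc a b)) (hg_nonneg : ∀ x ∈ Icc a b, 0 ≤ g x) :
    ∫ x in a..b, g x / f x ≤ g b / derivWithin f (Icc a b) a * Real.log (f b / f a) := by
  set f' := derivWithin f (Icc a b)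
  have ha : a ∈ Icc a b := left_mem_Icc.2 hab
  have hb : b ∈ Icc a b := right_mem_Icc.2 hab
  have hf₀ : ∀ x ∈ Icc a b, f x ≠ 0 := fun x hx => (hf_pos x hx).ne'
  have hint : IntervalIntegrable (fun x => f' x / f x) volume a b :=
    hf'_mono.intervalIntegrable_div hab hf_diff.continuousOn hf₀
  calc ∫ x in a..b, g x / f x
      ≤ ∫ x in a..b, g b / f' a * (f' x / f x) :=
        intervalIntegral.integral_mono_on hab
          (hg_mono.intervalIntegrable_div hab hf_diff.continuousOn hf₀) (hint.const_mul _)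
          fun x hx => div_le_div_mul_div_of_le (hg_mono hx hb hx.2) (hg_nonneg b hb)
            (hf_pos x hx) hf'a (hf'_mono ha hx hx.1)
    _ = g b / f' a * Real.log (f b / f a) := by
        rw [intervalIntegral.integral_const_mul,
          integral_derivWithin_div_eq_log_div hab hf_pos hf_diff hint]

theorem stmt9 (a b : ℝ) (hab : a < b)
    (f : ℝ → ℝ) (hf_pos : ∀ x ∈ Set.Icc a b, 0 < f x)
    (hf_diff : DifferentiableOn ℝ f (Set.Icc a b))
    (hf'_mono : MonotoneOn (derivWithin f (Set.Icc a b)) (Set.Icc a b))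
    (hf'a : 0 < derivWithin f (Set.Icc a b) a)
    (g : ℝ → ℝ) (hg_mono : MonotoneOn g (Set.Icc a b))
    (hg_nonneg : ∀ x ∈ Set.Icc a b, 0 ≤ g x) :
    (∫ x in a..b, g x / f x) ≤
        (g b / derivWithin f (Set.Icc a b) a) * Real.log (f b / f a) ∧
      (g b / derivWithin f (Set.Icc a b) a) * Real.log (f b / f a) ≤
        f b * g b / (Real.exp 1 * f a * derivWithin f (Set.Icc a b) a) := by
  have ha : a ∈ Icc a b := left_mem_Icc.2 hab.le
  have hb : b ∈ Icc a b := right_mem_Icc.2 hab.le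
  refine ⟨integral_div_le_div_derivWithin_mul_log hab.le hf_pos hf_diff hf'_mono hf'a
    hg_mono hg_nonneg, ?_⟩
  calc g b / derivWithin f (Icc a b) a * Real.log (f b / f a)
      ≤ g b / derivWithin f (Icc a b) a * (f b / f a / Real.exp 1) :=
        mul_le_mul_of_nonneg_left
          (Real.log_le_div_exp_one_s9 (div_pos (hf_pos b hb) (hf_pos a ha)))
          (div_nonneg (hg_nonneg b hb) hf'a.le)
    _ = f b * g b / (Real.exp 1 * f a * derivWithin f (Icc a b) a) := by
        field_simp
end

section
/- Let f be a twice differentiable, strictly positive function on [a,b] with f'(a) > 0 and f'' ≥ 0, and let n ∈ ℕ (n ≥ 1). Then (log(f(b)/f(a)))^{n+1} + (n!·(b-a)/(n+1)^{n-1})·(f'(a)/f(b)) ≤ (n!/(n+1)ⁿ)·((f'(b))ⁿ/(f'(a))ⁿ)·(f(b)^{n+1}/f(a)^{n+1} - 1). -/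
lemma aux_exp10 (x : ℝ) (hx : 0 ≤ x) (m : ℕ) :
    1 + x + x ^ (m + 2) / (m + 2).factorial ≤ Real.exp x := by
  have hs := Real.sum_le_exp_of_nonneg hx (m + 3)
  have hsub : ({0, 1, m + 2} : Finset ℕ) ⊆ Finset.range (m + 3) := by
    intro i hi
    simp only [Finset.mem_insert, Finset.mem_singleton] at hi
    rcases hi with rfl | rfl | rfl <;> simp [Finset.mem_range]
  have hmono : ∑ i ∈ ({0, 1, m + 2} : Finset ℕ), x ^ i / (i.factorial : ℝ)
      ≤ ∑ i ∈ Finset.range (m + 3), x ^ i / (i.factorial : ℝ) :=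
    Finset.sum_le_sum_of_subset_of_nonneg hsub (fun i _ _ => by positivity)
  have hval : ∑ i ∈ ({0, 1, m + 2} : Finset ℕ), x ^ i / i.factorial
      = 1 + x + x ^ (m + 2) / (m + 2).factorial := by
    rw [show ({0, 1, m + 2} : Finset ℕ) = insert 0 (insert 1 {m + 2}) from rfl,
      Finset.sum_insert (by simp), Finset.sum_insert (by simp),
      Finset.sum_singleton]
    simp [Nat.factorial]
    ring
  calc 1 + x + x ^ (m + 2) / (m + 2).factorial
      = ∑ i ∈ ({0, 1, m + 2} : Finset ℕ), x ^ i / i.factorial := hval.symm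
    _ ≤ ∑ i ∈ Finset.range (m + 3), x ^ i / i.factorial := hmono
    _ ≤ Real.exp x := hs

theorem stmt10 (a b : ℝ) (hab : a < b)
    (f : ℝ → ℝ)
    (hf_diff : DifferentiableOn ℝ f (Set.Icc a b))
    (hf_diff2 : DifferentiableOn ℝ (derivWithin f (Set.Icc a b)) (Set.Icc a b))
    (hf_pos : ∀ x ∈ Set.Icc a b, 0 < f x)
    (hf'a : 0 < derivWithin f (Set.Icc a b) a)
    (hf''_nonneg : ∀ x ∈ Set.Icc a b,
      0 ≤ derivWithin (derivWithin f (Set.Icc a b)) (Set.Icc a b) x)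
    (n : ℕ) (hn : 1 ≤ n) :
    Real.log (f b / f a) ^ (n + 1) +
      ((n.factorial : ℝ) * (b - a) / ((n : ℝ) + 1) ^ (n - 1)) *
        (derivWithin f (Set.Icc a b) a / f b) ≤
    ((n.factorial : ℝ) / ((n : ℝ) + 1) ^ n) *
      (derivWithin f (Set.Icc a b) b ^ n / derivWithin f (Set.Icc a b) a ^ n) *
      (f b ^ (n + 1) / f a ^ (n + 1) - 1) := by
  obtain ⟨m, rfl⟩ : ∃ m, n = m + 1 := ⟨n - 1, (Nat.succ_pred_eq_of_pos hn).symm⟩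
  set f' := derivWithin f (Set.Icc a b) with hf'def
  have hsub : Set.Ioo a b ⊆ Set.Icc a b := Set.Ioo_subset_Icc_self
  have haI : a ∈ Set.Icc a b := Set.left_mem_Icc.2 hab.le
  have hbI : b ∈ Set.Icc a b := Set.right_mem_Icc.2 hab.le
  -- f' is monotone
  have hf'mono : MonotoneOn f' (Set.Icc a b) := by
    apply monotoneOn_of_hasDerivWithinAt_nonneg (convex_Icc a b) hf_diff2.continuousOn
      (f' := derivWithin f' (Set.Icc a b))
    · intro x hx
      rw [interior_Icc] at hx ⊢
      exact ((hf_diff2 x (hsub hx)).hasDerivWithinAt).mono hsub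
    · intro x hx
      rw [interior_Icc] at hx
      exact hf''_nonneg x (hsub hx)
  have hf'pos : ∀ x ∈ Set.Icc a b, 0 < f' x :=
    fun x hx => lt_of_lt_of_le hf'a (hf'mono haI hx hx.1)
  -- f is strictly monotone
  have hfmono : StrictMonoOn f (Set.Icc a b) := by
    apply strictMonoOn_of_hasDerivWithinAt_pos (convex_Icc a b) hf_diff.continuousOn (f' := f')
    · intro x hx
      rw [interior_Icc] at hx ⊢
      exact ((hf_diff x (hsub hx)).hasDerivWithinAt).mono hsub
    · intro x hx
      rw [interior_Icc] at hx
      exact hf'pos x (hsub hx)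
  have hfa : 0 < f a := hf_pos a haI
  have hfb : 0 < f b := hf_pos b hbI
  have hfab : f a < f b := hfmono haI hbI hab
  set t := f b / f a with htdef
  have ht1 : 1 < t := (one_lt_div hfa).2 hfab
  have htpos : 0 < t := lt_trans one_pos ht1
  set L := Real.log t with hLdef
  have hL0 : 0 ≤ L := Real.log_nonneg ht1.le
  -- Key inequality A : (b - a) * (f' a / f b) ≤ L
  have hg : MonotoneOn (fun x => f b * Real.log (f x) - f' a * x) (Set.Icc a b) := by
    apply monotoneOn_of_hasDerivWithinAt_nonneg (convex_Icc a b)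
      (f' := fun x => f b * (f' x / f x) - f' a * 1)
    · exact (continuousOn_const.mul (hf_diff.continuousOn.log
        (fun x hx => (hf_pos x hx).ne'))).sub (continuousOn_const.mul continuousOn_id)
    · intro x hx
      rw [interior_Icc] at hx ⊢
      have hd : HasDerivWithinAt f (f' x) (Set.Ioo a b) x :=
        ((hf_diff x (hsub hx)).hasDerivWithinAt).mono hsub
      exact ((hd.log (hf_pos x (hsub hx)).ne').const_mul (f b)).sub
        ((hasDerivWithinAt_id x _).const_mul (f' a))
    · intro x hx
      rw [interior_Icc] at hx
      have h1 : f' a ≤ f' x := hf'mono haI (hsub hx) hx.1.le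
      have h2 : f x ≤ f b := hfmono.monotoneOn (hsub hx) hbI hx.2.le
      have h3 : 0 < f x := hf_pos x (hsub hx)
      have h4 : f' a / f b ≤ f' x / f x :=
        div_le_div₀ (le_of_lt (lt_of_lt_of_le hf'a h1)) h1 h3 h2
      have h5 : f b * (f' a / f b) ≤ f b * (f' x / f x) :=
        mul_le_mul_of_nonneg_left h4 hfb.le
      have h6 : f b * (f' a / f b) = f' a := by field_simp
      linarith
  have hA : (b - a) * (f' a / f b) ≤ L := by
    have hgab := hg haI hbI hab.le
    simp only at hgab
    have hlogdiv : L = Real.log (f b) - Real.log (f a) := by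
      rw [hLdef, htdef, Real.log_div hfb.ne' hfa.ne']
    have h7 : f' a * (b - a) ≤ f b * (Real.log (f b) - Real.log (f a)) := by
      nlinarith [hgab]
    rw [hlogdiv]
    rw [show (b - a) * (f' a / f b) = f' a * (b - a) / f b by ring, div_le_iff₀ hfb]
    nlinarith [h7]
  -- Key inequality B
  set P : ℝ := (m : ℝ) + 1 + 1 with hPdef
  have hP0 : 0 < P := by positivity
  have hPcast : P = ((m + 2 : ℕ) : ℝ) := by push_cast; ring
  have hB : 1 + P * L + (P * L) ^ (m + 2) / ((m + 2).factorial : ℝ) ≤ t ^ (m + 2) := by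
    have := aux_exp10 (P * L) (by positivity) m
    have hexp : Real.exp (P * L) = t ^ (m + 2) := by
      rw [hPcast, Real.exp_nat_mul, Real.exp_log htpos]
    linarith [this, hexp.le, hexp.ge]
  have hfact : ((m + 2).factorial : ℝ) = P * ((m + 1).factorial : ℝ) := by
    rw [hPcast]
    push_cast [Nat.factorial_succ (m + 1)]
    ring
  have hfactpos : (0 : ℝ) < ((m + 1).factorial : ℝ) := by positivity
  -- Goal2 : L^(m+2) + ((m+1)!/P^m) * L ≤ ((m+1)!/P^(m+1)) * (t^(m+2) - 1)
  have hGoal2 : L ^ (m + 2) + (((m + 1).factorial : ℝ) / P ^ m) * L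
      ≤ (((m + 1).factorial : ℝ) / P ^ (m + 1)) * (t ^ (m + 2) - 1) := by
    have h1 : ((m + 2).factorial : ℝ) * (1 + P * L) + (P * L) ^ (m + 2)
        ≤ ((m + 2).factorial : ℝ) * t ^ (m + 2) := by
      have hf2 : (0 : ℝ) < ((m + 2).factorial : ℝ) := by positivity
      have := mul_le_mul_of_nonneg_left hB hf2.le
      rw [mul_add, mul_div_cancel₀ _ hf2.ne'] at this
      linarith
    have key : P ^ (m + 2) * (L ^ (m + 2) + (((m + 1).factorial : ℝ) / P ^ m) * L)
        ≤ P ^ (m + 2) * ((((m + 1).factorial : ℝ) / P ^ (m + 1)) * (t ^ (m + 2) - 1)) := by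
      have e1 : P ^ (m + 2) * (L ^ (m + 2) + (((m + 1).factorial : ℝ) / P ^ m) * L)
          = (P * L) ^ (m + 2) + P ^ 2 * ((m + 1).factorial : ℝ) * L := by
        rw [mul_pow]
        field_simp
        ring
      have e2 : P ^ (m + 2) * ((((m + 1).factorial : ℝ) / P ^ (m + 1)) * (t ^ (m + 2) - 1))
          = P * ((m + 1).factorial : ℝ) * (t ^ (m + 2) - 1) := by
        field_simp
        ring
      rw [e1, e2]
      rw [hfact] at h1
      nlinarith [h1]
    exact le_of_mul_le_mul_left key (by positivity)
  -- assemble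
  have hn1 : m + 1 + 1 - 1 = m + 1 := rfl
  have hm1 : m + 1 - 1 = m := rfl
  have hT : t ^ (m + 2) = f b ^ (m + 1 + 1) / f a ^ (m + 1 + 1) := by
    rw [htdef, div_pow]
  have hT1 : (0:ℝ) ≤ t ^ (m + 2) - 1 := by
    have : (1:ℝ) ≤ t ^ (m + 2) := one_le_pow₀ ht1.le
    linarith
  have hR : 1 ≤ f' b ^ (m + 1) / f' a ^ (m + 1) := by
    have h1 : f' a ≤ f' b := hf'mono haI hbI hab.le
    have h2 : f' a ^ (m + 1) ≤ f' b ^ (m + 1) := pow_le_pow_left₀ hf'a.le h1 _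
    exact (one_le_div (by positivity)).2 h2
  have hC : (0:ℝ) ≤ ((m + 1).factorial : ℝ) / P ^ (m + 1) := by positivity
  have step1 : (((m + 1).factorial : ℝ) * (b - a) / P ^ m) * (f' a / f b)
      ≤ (((m + 1).factorial : ℝ) / P ^ m) * L := by
    have e : (((m + 1).factorial : ℝ) * (b - a) / P ^ m) * (f' a / f b)
        = (((m + 1).factorial : ℝ) / P ^ m) * ((b - a) * (f' a / f b)) := by ring
    rw [e]
    exact mul_le_mul_of_nonneg_left hA (by positivity)
  have step3 : (((m + 1).factorial : ℝ) / P ^ (m + 1)) * (t ^ (m + 2) - 1)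
      ≤ (((m + 1).factorial : ℝ) / P ^ (m + 1)) * (f' b ^ (m + 1) / f' a ^ (m + 1))
        * (t ^ (m + 2) - 1) := by
    have h := mul_le_mul_of_nonneg_right (mul_le_mul_of_nonneg_left hR hC) hT1
    calc (((m + 1).factorial : ℝ) / P ^ (m + 1)) * (t ^ (m + 2) - 1)
        = (((m + 1).factorial : ℝ) / P ^ (m + 1)) * 1 * (t ^ (m + 2) - 1) := by ring
      _ ≤ _ := h
  have hLpow : Real.log (f b / f a) ^ (m + 1 + 1) = L ^ (m + 2) := rfl
  simp only [hn1, hm1]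
  push_cast
  rw [show ((m : ℝ) + 1 + 1) = P from rfl] at *
  calc Real.log (f b / f a) ^ (m + 1 + 1)
        + (((m + 1).factorial : ℝ) * (b - a) / P ^ m) * (f' a / f b)
      = L ^ (m + 2) + (((m + 1).factorial : ℝ) * (b - a) / P ^ m) * (f' a / f b) := by
        rw [hLpow]
    _ ≤ L ^ (m + 2) + (((m + 1).factorial : ℝ) / P ^ m) * L := by linarith [step1]
    _ ≤ (((m + 1).factorial : ℝ) / P ^ (m + 1)) * (t ^ (m + 2) - 1) := hGoal2
    _ ≤ (((m + 1).factorial : ℝ) / P ^ (m + 1)) * (f' b ^ (m + 1) / f' a ^ (m + 1))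
        * (t ^ (m + 2) - 1) := step3
    _ = (((m + 1).factorial : ℝ) / P ^ (m + 1)) * (f' b ^ (m + 1) / f' a ^ (m + 1))
        * (f b ^ (m + 1 + 1) / f a ^ (m + 1 + 1) - 1) := by rw [hT]
end
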